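/- arXiv:1910.00151 — 13 statements merged into one kernel-verified Lean document; each statement's English description precedes it below -/
import Mathlib

section
/- Conservation of mass for the 1D semi-discrete scheme: if ρ : [0,∞) → ℝ^N is a solution of the semi-discrete scheme, then for every t ≥ 0 one has Σ_{j=1}^N h_j ρ_j(t) = Σ_{j=1}^N h_j ρ_j(0). -/
/-! The mass changes at the rate `∑ⱼ (C_{j+1/2} - C_{j-1/2})`, a telescoping sum of fluxes which
vanishes because both boundary fluxes are zero; a function with vanishing right derivative on
`[0, ∞)` is constant there. -/

open Finset Set

theorem Finset.sum_Icc_one_sub_pred {G : Type*} [AddCommGroup G] (f : ℕ → G) (n : ℕ) :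
    ∑ j ∈ Icc 1 n, (f j - f (j - 1)) = f n - f 0 := by
  induction n with
  | zero => simp
  | succ k ih =>
    rw [sum_Icc_succ_top (Nat.le_add_left 1 k), ih, Nat.add_sub_cancel]
    abel

theorem eq_of_hasDerivWithinAt_Ici_zero {E : Type*} [NormedAddCommGroup E] [NormedSpace ℝ E]
    {f : ℝ → E} {a : ℝ} (hf : ∀ s, a ≤ s → HasDerivWithinAt f 0 (Ici a) s) {t : ℝ}
    (ht : a ≤ t) : f t = f a := by
  have hcont : ContinuousOn f (Icc a t) := fun s hs =>
    (hf s hs.1).continuousWithinAt.mono Icc_subset_Ici_self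
  exact constant_of_has_deriv_right_zero hcont
    (fun s hs => (hf s hs.1).mono (Ici_subset_Ici.mpr hs.1)) t (right_mem_Icc.mpr ht)

theorem hasDerivWithinAt_sum_mul_of_div {ι : Type*} {s : Finset ι} {w : ι → ℝ}
    (hw : ∀ j ∈ s, w j ≠ 0) {u : ℝ → ι → ℝ} {D : ι → ℝ} {S : Set ℝ} {t : ℝ}
    (hu : ∀ j ∈ s, HasDerivWithinAt (fun τ => u τ j) (D j / w j) S t) :
    HasDerivWithinAt (fun τ => ∑ j ∈ s, w j * u τ j) (∑ j ∈ s, D j) S t := by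
  refine HasDerivWithinAt.fun_sum fun j hj => ?_
  simpa only [mul_div_cancel₀ _ (hw j hj)] using (hu j hj).const_mul (w j)

theorem semi_discrete_mass_conservation_1d_general
    (N : ℕ)
    (h : ℕ → ℝ) (hpos : ∀ j ∈ Finset.Icc 1 N, 0 < h j)
    (ρ : ℝ → ℕ → ℝ)
    (C : ℝ → ℕ → ℝ)
    (hC0 : ∀ t : ℝ, C t 0 = 0) (hCN : ∀ t : ℝ, C t N = 0)
    (hode : ∀ j ∈ Finset.Icc 1 N, ∀ t : ℝ, 0 ≤ t →
      HasDerivWithinAt (fun s => ρ s j) ((C t j - C t (j - 1)) / h j) (Set.Ici 0) t)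
 :
    ∀ t : ℝ, 0 ≤ t →
      ∑ j ∈ Finset.Icc 1 N, h j * ρ t j = ∑ j ∈ Finset.Icc 1 N, h j * ρ 0 j := by
  intro t ht
  have hmass_rate : ∀ s, 0 ≤ s →
      HasDerivWithinAt (fun τ => ∑ j ∈ Icc 1 N, h j * ρ τ j) 0 (Ici 0) s := by
    intro s hs
    have hrate := hasDerivWithinAt_sum_mul_of_div
      (fun j hj => (hpos j hj).ne') (fun j hj => hode j hj s hs)
    rwa [sum_Icc_one_sub_pred (C s), hCN, hC0, sub_self] at hrate
  exact eq_of_hasDerivWithinAt_Ici_zero hmass_rate ht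

theorem semi_discrete_mass_conservation_1d
    (N : ℕ) (hN : 2 ≤ N)
    (h : ℕ → ℝ) (hpos : ∀ j ∈ Finset.Icc 1 N, 0 < h j)
    (a : ℝ)
    (xhalf xc hhalf : ℕ → ℝ)
    (hxhalf0 : xhalf 0 = a)
    (hxhalf : ∀ j ∈ Finset.Icc 1 N, xhalf j = xhalf (j - 1) + h j)
    (hxc : ∀ j ∈ Finset.Icc 1 N, xc j = xhalf (j - 1) + h j / 2)
    (hhhalf : ∀ j ∈ Finset.Icc 1 (N - 1), hhalf j = (h j + h (j + 1)) / 2)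
    (V W : ℝ → ℝ)
    (Q : ℝ → (ℕ → ℝ) → ℝ)
    (hQ : ∀ (x : ℝ) (v : ℕ → ℝ), Q x v =
      Real.exp (-V x - ∑ i ∈ Finset.Icc 1 N, h i * W (xc i - x) * v i))
    (ρ : ℝ → ℕ → ℝ)
    (M Mhalf C : ℝ → ℕ → ℝ)
    (hM : ∀ t : ℝ, ∀ j ∈ Finset.Icc 1 N, M t j = Q (xc j) (ρ t))
    (hMhalf : ∀ t : ℝ, ∀ j ∈ Finset.Icc 1 (N - 1), Mhalf t j = Q (xhalf j) (ρ t))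
    (hC : ∀ t : ℝ, ∀ j ∈ Finset.Icc 1 (N - 1),
      C t j = Mhalf t j / hhalf j * (ρ t (j + 1) / M t (j + 1) - ρ t j / M t j))
    (hC0 : ∀ t : ℝ, C t 0 = 0) (hCN : ∀ t : ℝ, C t N = 0)
    (hode : ∀ j ∈ Finset.Icc 1 N, ∀ t : ℝ, 0 ≤ t →
      HasDerivWithinAt (fun s => ρ s j) ((C t j - C t (j - 1)) / h j) (Set.Ici 0) t)
 :
    ∀ t : ℝ, 0 ≤ t →
      ∑ j ∈ Finset.Icc 1 N, h j * ρ t j = ∑ j ∈ Finset.Icc 1 N, h j * ρ 0 j :=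
  semi_discrete_mass_conservation_1d_general N h hpos ρ C hC0 hCN hode
end

section
/- Positivity preservation for the 1D semi-discrete scheme: if ρ : [0,∞) → ℝ^N is a solution of the semi-discrete scheme and ρ_j(0) ≥ 0 for all 1 ≤ j ≤ N, then ρ_j(t) ≥ 0 for all t ≥ 0 and all 1 ≤ j ≤ N. -/
/-!
Written as a system `ρ' = A(t) ρ`, the scheme has nonnegative off-diagonal coefficients
`M_{j±1/2} / (h_j h_{j±1/2} M_{j±1})`, and these stay bounded on `[0, T]` because `ρ`, hence every
`M`, is continuous there. So if `-e` is the smallest component of `ρ(t)` and `ρ_j(t) = -e`, then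
`ρ_j'(t) ≥ -K e` for a constant `K`. Adding the barrier `ε e^{(K+1)t}` to every component, at the
first time a component of the perturbed vector reaches zero its derivative would be positive,
which is impossible; letting `ε → 0` gives `ρ ≥ 0`.
-/

open Set Real

theorem hasDerivWithinAt_nonpos_of_isMinOn_Icc {g : ℝ → ℝ} {g' a b : ℝ} (hab : a < b)
    (hmin : IsMinOn g (Icc a b) b) (hg : HasDerivWithinAt g g' (Icc a b) b) : g' ≤ 0 := by
  have hcone : a - b ∈ posTangentConeAt (Icc a b) b :=
    sub_mem_posTangentConeAt_of_segment_subset <| by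
      rw [segment_symm]; exact segment_subset_Icc hab.le
  have := hmin.localize.hasFDerivWithinAt_nonneg hg.hasFDerivWithinAt hcone
  rw [ContinuousLinearMap.toSpanSingleton_apply, smul_eq_mul] at this
  nlinarith

theorem IsCompact.exists_bound_of_continuousOn_finset {X ι : Type*} [TopologicalSpace X]
    {K : Set X} (hK : IsCompact K) (s : Finset ι) {f : ι → X → ℝ}
    (hf : ∀ i ∈ s, ContinuousOn (f i) K) :
    ∃ B, 0 ≤ B ∧ ∀ i ∈ s, ∀ x ∈ K, f i x ≤ B := by
  obtain ⟨B, hB⟩ := hK.exists_bound_of_continuousOn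
    (continuousOn_finsetSum s fun i hi => (hf i hi).abs)
  refine ⟨max B 0, le_max_right _ _, fun i hi x hx => ?_⟩
  calc f i x ≤ |f i x| := le_abs_self _
    _ ≤ ∑ j ∈ s, |f j x| := Finset.single_le_sum (fun j _ => abs_nonneg (f j x)) hi
    _ ≤ ‖∑ j ∈ s, |f j x|‖ := le_norm_self _
    _ ≤ max B 0 := (hB x hx).trans (le_max_left _ _)

theorem forall_pos_of_deriv_pos_at_zero {ι : Type*} (s : Finset ι) {g g' : ℝ → ι → ℝ} {a b : ℝ}
    (hg : ∀ j ∈ s, ∀ t ∈ Icc a b, HasDerivWithinAt (g · j) (g' t j) (Icc a b) t)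
    (ha : ∀ j ∈ s, 0 < g a j)
    (hzero : ∀ t ∈ Ioc a b, (∀ i ∈ s, 0 ≤ g t i) → ∀ j ∈ s, g t j = 0 → 0 < g' t j) :
    ∀ t ∈ Icc a b, ∀ j ∈ s, 0 < g t j := by
  have hcont : ∀ j ∈ s, ContinuousOn (g · j) (Icc a b) :=
    fun j hj t ht => (hg j hj t ht).continuousWithinAt
  by_contra! hbad
  -- `sInf S` is the first time at which some component vanishes
  set S := ⋃ j ∈ s, Icc a b ∩ (g · j) ⁻¹' Iic 0
  have hS_closed : IsClosed S := isClosed_biUnion_finset fun j hj =>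
    (hcont j hj).preimage_isClosed_of_isClosed isClosed_Icc isClosed_Iic
  have hS_bdd : BddBelow S := ⟨a, fun t ht => by
    obtain ⟨j, -, ht, -⟩ := mem_iUnion₂.1 ht; exact ht.1⟩
  have hS_ne : S.Nonempty := by
    obtain ⟨t, ht, j, hj, hgt⟩ := hbad; exact ⟨t, mem_iUnion₂.2 ⟨j, hj, ht, hgt⟩⟩
  obtain ⟨j, hj, hts, hgj⟩ := mem_iUnion₂.1 (hS_closed.csInf_mem hS_ne hS_bdd)
  set ts := sInf S
  have hbefore : ∀ τ ∈ Ico a ts, ∀ i ∈ s, 0 < g τ i := fun τ hτ i hi => by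
    by_contra! hgi
    exact (csInf_le hS_bdd (mem_iUnion₂.2 ⟨i, hi, ⟨hτ.1, hτ.2.le.trans hts.2⟩, hgi⟩)).not_gt hτ.2
  have hats : a < ts := hts.1.lt_of_ne fun h => (ha j hj).not_ge (h ▸ hgj)
  have hnonneg : ∀ i ∈ s, 0 ≤ g ts i := fun i hi =>
    ContinuousWithinAt.closure_le (f := fun _ => 0) (g := (g · i))
      (by rw [closure_Ico hats.ne]; exact right_mem_Icc.2 hats.le) continuousWithinAt_const
      ((hcont i hi ts hts).mono (Ico_subset_Icc_self.trans (Icc_subset_Icc_right hts.2)))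
      fun τ hτ => (hbefore τ hτ i hi).le
  have hgj0 : g ts j = 0 := le_antisymm hgj (hnonneg j hj)
  have hmin : IsMinOn (g · j) (Icc a ts) ts := isMinOn_iff.2 fun τ hτ => by
    rcases hτ.2.lt_or_eq with hlt | heq
    · exact hgj0.trans_le (hbefore τ ⟨hτ.1, hlt⟩ j hj).le
    · rw [heq]
  exact (hzero ts ⟨hats, hts.2⟩ hnonneg j hj hgj0).not_ge <|
    hasDerivWithinAt_nonpos_of_isMinOn_Icc hats hmin <|
      (hg j hj ts hts).mono (Icc_subset_Icc_right hts.2)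

theorem nonneg_of_deriv_ge_at_min {ι : Type*} (s : Finset ι) {u u' : ℝ → ι → ℝ} {a b K : ℝ}
    (hu : ∀ j ∈ s, ∀ t ∈ Icc a b, HasDerivWithinAt (u · j) (u' t j) (Icc a b) t)
    (ha : ∀ j ∈ s, 0 ≤ u a j)
    (hmin : ∀ t ∈ Ioc a b, ∀ e > 0, (∀ i ∈ s, -e ≤ u t i) → ∀ j ∈ s, u t j = -e →
      -(K * e) ≤ u' t j) :
    ∀ t ∈ Icc a b, ∀ j ∈ s, 0 ≤ u t j := by
  have hbarrier : ∀ ε > 0, ∀ t ∈ Icc a b, ∀ j ∈ s, 0 < u t j + ε * exp ((K + 1) * t) := by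
    intro ε hε
    have hexp (t : ℝ) : HasDerivAt (fun τ => ε * exp ((K + 1) * τ))
        (ε * exp ((K + 1) * t) * (K + 1)) t := by
      simpa [mul_assoc] using (((hasDerivAt_id t).const_mul (K + 1)).exp).const_mul ε
    refine forall_pos_of_deriv_pos_at_zero s
      (fun j hj t ht => (hu j hj t ht).add (hexp t).hasDerivWithinAt)
      (fun j hj => add_pos_of_nonneg_of_pos (ha j hj) (by positivity)) ?_
    intro t ht hnonneg j hj hzero
    have hE : 0 < ε * exp ((K + 1) * t) := by positivity
    have := hmin t ht _ hE (fun i hi => by linarith [hnonneg i hi]) j hj (by linarith)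
    nlinarith
  intro t ht j hj
  refine le_of_forall_pos_lt_add fun δ hδ => ?_
  have := hbarrier (δ / exp ((K + 1) * t)) (by positivity) t ht j hj
  rwa [div_mul_cancel₀ _ (exp_pos _).ne'] at this

theorem neg_mul_div_le_flux {c m m' e y : ℝ} (hc : 0 ≤ c) (hm : 0 < m) (hm' : 0 < m')
    (he : 0 ≤ e) (hy : -e ≤ y) : -(e * (c / m')) ≤ c * (y / m' - -e / m) := by
  have hy' : c * (-e / m') ≤ c * (y / m') :=
    mul_le_mul_of_nonneg_left (div_le_div_of_nonneg_right hy hm'.le) hc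
  have : 0 ≤ c * (e / m) := by positivity
  linarith [show c * (y / m' - -e / m) = c * (y / m') + c * (e / m) by ring,
    show c * (-e / m') = -(e * (c / m')) by ring]

theorem flux_le_mul_div {c m m' e y : ℝ} (hc : 0 ≤ c) (hm : 0 < m) (hm' : 0 < m')
    (he : 0 ≤ e) (hy : -e ≤ y) : c * (-e / m' - y / m) ≤ e * (c / m) := by
  have hy' : c * (-e / m) ≤ c * (y / m) :=
    mul_le_mul_of_nonneg_left (div_le_div_of_nonneg_right hy hm.le) hc
  have : 0 ≤ c * (e / m') := by positivity
  linarith [show c * (-e / m' - y / m) = -(c * (e / m')) - c * (y / m) by ring,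
    show c * (-e / m) = -(e * (c / m)) by ring]

/-- `C i` is the flux `C_{i+1/2}` through the interface between cells `i` and `i + 1`, and
`c i` its coefficient `M_{i+1/2} / h_{i+1/2}`. -/
structure IsSchemeFlux (N : ℕ) (ρ M c C : ℕ → ℝ) : Prop where
  pos : ∀ i ∈ Finset.Icc 1 N, 0 < M i
  coeff_nonneg : ∀ i ∈ Finset.Icc 1 (N - 1), 0 ≤ c i
  eq : ∀ i ∈ Finset.Icc 1 (N - 1), C i = c i * (ρ (i + 1) / M (i + 1) - ρ i / M i)
  left : C 0 = 0
  right : C N = 0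

namespace IsSchemeFlux

variable {N j : ℕ} {ρ M c C : ℕ → ℝ} {B e : ℝ}

theorem neg_mul_le_right (hF : IsSchemeFlux N ρ M c C) (hj : j ∈ Finset.Icc 1 N) (hB : 0 ≤ B)
    (hcB : ∀ i ∈ Finset.Icc 1 (N - 1), c i / M (i + 1) ≤ B) (he : 0 ≤ e)
    (hρ : ∀ i ∈ Finset.Icc 1 N, -e ≤ ρ i) (hρj : ρ j = -e) : -(e * B) ≤ C j := by
  rw [Finset.mem_Icc] at hj
  rcases hj.2.lt_or_eq with hjN | rfl
  · have hj' : j ∈ Finset.Icc 1 (N - 1) := Finset.mem_Icc.2 ⟨hj.1, by omega⟩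
    have hj1 : j + 1 ∈ Finset.Icc 1 N := Finset.mem_Icc.2 ⟨by omega, by omega⟩
    rw [hF.eq j hj', hρj]
    exact (neg_le_neg (mul_le_mul_of_nonneg_left (hcB j hj') he)).trans <|
      neg_mul_div_le_flux (hF.coeff_nonneg j hj') (hF.pos j (Finset.mem_Icc.2 hj))
        (hF.pos _ hj1) he (hρ _ hj1)
  · rw [hF.right]; nlinarith

theorem left_le_mul (hF : IsSchemeFlux N ρ M c C) (hj : j ∈ Finset.Icc 1 N) (hB : 0 ≤ B)
    (hcB : ∀ i ∈ Finset.Icc 1 (N - 1), c i / M i ≤ B) (he : 0 ≤ e)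
    (hρ : ∀ i ∈ Finset.Icc 1 N, -e ≤ ρ i) (hρj : ρ j = -e) : C (j - 1) ≤ e * B := by
  rw [Finset.mem_Icc] at hj
  rcases hj.1.eq_or_lt with rfl | h1j
  · rw [Nat.sub_self, hF.left]; positivity
  · have hj' : j - 1 ∈ Finset.Icc 1 (N - 1) := Finset.mem_Icc.2 ⟨by omega, by omega⟩
    have hj1 : j - 1 ∈ Finset.Icc 1 N := Finset.mem_Icc.2 ⟨by omega, by omega⟩
    rw [hF.eq _ hj', Nat.sub_add_cancel hj.1, hρj]
    exact (flux_le_mul_div (hF.coeff_nonneg _ hj') (hF.pos _ hj1)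
      (hF.pos j (Finset.mem_Icc.2 hj)) he (hρ _ hj1)).trans
      (mul_le_mul_of_nonneg_left (hcB _ hj') he)

theorem neg_mul_le_divergence {h : ℕ → ℝ} {hmin : ℝ} (hF : IsSchemeFlux N ρ M c C)
    (hj : j ∈ Finset.Icc 1 N) (hmin_pos : 0 < hmin) (hmin_le : ∀ i ∈ Finset.Icc 1 N, hmin ≤ h i)
    (hB : 0 ≤ B) (hcB : ∀ i ∈ Finset.Icc 1 (N - 1), ∀ k ∈ Finset.range 2, c i / M (i + k) ≤ B)
    (he : 0 ≤ e) (hρ : ∀ i ∈ Finset.Icc 1 N, -e ≤ ρ i) (hρj : ρ j = -e) :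
    -(2 * B / hmin * e) ≤ (C j - C (j - 1)) / h j := by
  have hright := hF.neg_mul_le_right hj hB (fun i hi => hcB i hi 1 (by simp)) he hρ hρj
  have hleft := hF.left_le_mul hj hB (fun i hi => by simpa using hcB i hi 0 (by simp)) he hρ hρj
  have hhj := hmin_le j hj
  calc -(2 * B / hmin * e) = -(2 * B * e / hmin) := by ring
    _ ≤ -(2 * B * e / h j) :=
      neg_le_neg (div_le_div_of_nonneg_left (by positivity) hmin_pos hhj)
    _ = -(2 * B * e) / h j := by ring
    _ ≤ (C j - C (j - 1)) / h j :=
      div_le_div_of_nonneg_right (by linarith) (hmin_pos.trans_le hhj).le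

end IsSchemeFlux

theorem semi_discrete_positivity_1d_general
    (N : ℕ)
    (h : ℕ → ℝ) (hpos : ∀ j ∈ Finset.Icc 1 N, 0 < h j)
    (xhalf xc hhalf : ℕ → ℝ)
    (hhhalf : ∀ j ∈ Finset.Icc 1 (N - 1), hhalf j = (h j + h (j + 1)) / 2)
    (V W : ℝ → ℝ)
    (Q : ℝ → (ℕ → ℝ) → ℝ)
    (hQ : ∀ (x : ℝ) (v : ℕ → ℝ), Q x v =
      Real.exp (-V x - ∑ i ∈ Finset.Icc 1 N, h i * W (xc i - x) * v i))
    (ρ : ℝ → ℕ → ℝ)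
    (M Mhalf C : ℝ → ℕ → ℝ)
    (hM : ∀ t : ℝ, ∀ j ∈ Finset.Icc 1 N, M t j = Q (xc j) (ρ t))
    (hMhalf : ∀ t : ℝ, ∀ j ∈ Finset.Icc 1 (N - 1), Mhalf t j = Q (xhalf j) (ρ t))
    (hC : ∀ t : ℝ, ∀ j ∈ Finset.Icc 1 (N - 1),
      C t j = Mhalf t j / hhalf j * (ρ t (j + 1) / M t (j + 1) - ρ t j / M t j))
    (hC0 : ∀ t : ℝ, C t 0 = 0) (hCN : ∀ t : ℝ, C t N = 0)
    (hode : ∀ j ∈ Finset.Icc 1 N, ∀ t : ℝ, 0 ≤ t →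
      HasDerivWithinAt (fun s => ρ s j) ((C t j - C t (j - 1)) / h j) (Set.Ici 0) t)
    (hinit : ∀ j ∈ Finset.Icc 1 N, 0 ≤ ρ 0 j) :
    ∀ t : ℝ, 0 ≤ t → ∀ j ∈ Finset.Icc 1 N, 0 ≤ ρ t j := by
  intro T hT j₀ hj₀
  have hQpos (x : ℝ) (v : ℕ → ℝ) : 0 < Q x v := hQ x v ▸ exp_pos _
  have hρ : ∀ i ∈ Finset.Icc 1 N, ∀ t ∈ Icc 0 T,
      HasDerivWithinAt (ρ · i) ((C t i - C t (i - 1)) / h i) (Icc 0 T) t :=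
    fun i hi t ht => (hode i hi t ht.1).mono Icc_subset_Ici_self
  have hQcont (x : ℝ) : ContinuousOn (fun t => Q x (ρ t)) (Icc 0 T) := by
    simp only [hQ]
    exact (continuousOn_const.sub <| continuousOn_finsetSum _ fun i hi =>
      continuousOn_const.mul fun t ht => (hρ i hi t ht).continuousWithinAt).rexp
  have hadj {i : ℕ} (hi : i ∈ Finset.Icc 1 (N - 1)) :
      ∀ k ∈ Finset.range 2, i + k ∈ Finset.Icc 1 N := by
    simp only [Finset.mem_Icc, Finset.mem_range] at hi ⊢; omega
  have hcoeff : ∀ p ∈ Finset.Icc 1 (N - 1) ×ˢ Finset.range 2,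
      ContinuousOn (fun t => Mhalf t p.1 / hhalf p.1 / M t (p.1 + p.2)) (Icc 0 T) := by
    intro p hp
    obtain ⟨hp₁, hp₂⟩ := Finset.mem_product.1 hp
    refine (((hQcont (xhalf p.1)).div_const (hhalf p.1)).div (hQcont (xc (p.1 + p.2)))
      fun _ _ => (hQpos _ _).ne').congr fun t _ => ?_
    rw [hMhalf t _ hp₁, hM t _ (hadj hp₁ _ hp₂)]; rfl
  obtain ⟨B, hB, hcB⟩ := isCompact_Icc.exists_bound_of_continuousOn_finset _ hcoeff
  have hflux (t : ℝ) : IsSchemeFlux N (ρ t) (M t) (fun i => Mhalf t i / hhalf i) (C t) := by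
    refine ⟨fun i hi => hM t i hi ▸ hQpos _ _, fun i hi => ?_, hC t, hC0 t, hCN t⟩
    have := hpos i (hadj hi 0 (by simp))
    have := hpos (i + 1) (hadj hi 1 (by simp))
    rw [hMhalf t i hi, hhhalf i hi]
    exact div_nonneg (hQpos _ _).le (by linarith)
  obtain ⟨jmin, hjmin, hjmin_le⟩ := (Finset.Icc 1 N).exists_min_image h ⟨j₀, hj₀⟩
  refine nonneg_of_deriv_ge_at_min _ (K := 2 * B / h jmin) hρ hinit ?_ T ⟨hT, le_rfl⟩ j₀ hj₀
  intro t ht e he hρe j hj hρj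
  exact (hflux t).neg_mul_le_divergence hj (hpos jmin hjmin) hjmin_le hB
    (fun i hi k hk => hcB (i, k) (Finset.mem_product.2 ⟨hi, hk⟩) t (Ioc_subset_Icc_self ht))
    he.le hρe hρj

theorem semi_discrete_positivity_1d
    (N : ℕ) (hN : 2 ≤ N)
    (h : ℕ → ℝ) (hpos : ∀ j ∈ Finset.Icc 1 N, 0 < h j)
    (a : ℝ)
    (xhalf xc hhalf : ℕ → ℝ)
    (hxhalf0 : xhalf 0 = a)
    (hxhalf : ∀ j ∈ Finset.Icc 1 N, xhalf j = xhalf (j - 1) + h j)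
    (hxc : ∀ j ∈ Finset.Icc 1 N, xc j = xhalf (j - 1) + h j / 2)
    (hhhalf : ∀ j ∈ Finset.Icc 1 (N - 1), hhalf j = (h j + h (j + 1)) / 2)
    (V W : ℝ → ℝ)
    (Q : ℝ → (ℕ → ℝ) → ℝ)
    (hQ : ∀ (x : ℝ) (v : ℕ → ℝ), Q x v =
      Real.exp (-V x - ∑ i ∈ Finset.Icc 1 N, h i * W (xc i - x) * v i))
    (ρ : ℝ → ℕ → ℝ)
    (M Mhalf C : ℝ → ℕ → ℝ)
    (hM : ∀ t : ℝ, ∀ j ∈ Finset.Icc 1 N, M t j = Q (xc j) (ρ t))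
    (hMhalf : ∀ t : ℝ, ∀ j ∈ Finset.Icc 1 (N - 1), Mhalf t j = Q (xhalf j) (ρ t))
    (hC : ∀ t : ℝ, ∀ j ∈ Finset.Icc 1 (N - 1),
      C t j = Mhalf t j / hhalf j * (ρ t (j + 1) / M t (j + 1) - ρ t j / M t j))
    (hC0 : ∀ t : ℝ, C t 0 = 0) (hCN : ∀ t : ℝ, C t N = 0)
    (hode : ∀ j ∈ Finset.Icc 1 N, ∀ t : ℝ, 0 ≤ t →
      HasDerivWithinAt (fun s => ρ s j) ((C t j - C t (j - 1)) / h j) (Set.Ici 0) t)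
    (hinit : ∀ j ∈ Finset.Icc 1 N, 0 ≤ ρ 0 j) :
    ∀ t : ℝ, 0 ≤ t → ∀ j ∈ Finset.Icc 1 N, 0 ≤ ρ t j :=
  semi_discrete_positivity_1d_general N h hpos xhalf xc hhalf hhhalf V W Q hQ ρ M Mhalf C hM hMhalf
    hC hC0 hCN hode hinit
end

section
/- Entropy dissipation for the 1D semi-discrete scheme: assume W is symmetric (W(−x) = W(x) for all x ∈ ℝ) and let ρ : [0,∞) → ℝ^N be a solution of the semi-discrete scheme with ρ_j(t) > 0 for all j and all t ≥ 0. Then for every t ≥ 0 the discrete free energy E_h is differentiable at t with E_h'(t) ≤ −I_h(t), and moreover I_h(t) ≥ 0. -/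
/-!
Along the scheme, `E_h' = ∑ⱼ hⱼ ρⱼ' (log ρⱼ + 1 + V(xⱼ) + gⱼ)`, where the interaction part
contributes `gⱼ` rather than `gⱼ / 2` because the kernel `W(xᵢ - xⱼ)` is symmetric. Since
`log (ρⱼ / Mⱼ) = log ρⱼ + V(xⱼ) + gⱼ` and `hⱼ ρⱼ' = C_{j+1/2} - C_{j-1/2}`, a summation by parts
with zero boundary fluxes turns this into `-I_h`. Each term of `I_h` has the form
`(M/h) (u - v) (log u - log v) ≥ 0` by monotonicity of `log`.
-/

open Finset

section SummationByParts

variable {R : Type*} [CommRing R]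

theorem sum_Icc_sub_mul_eq (n : ℕ) (c φ : ℕ → R) :
    ∑ j ∈ Icc 1 (n + 1), (c j - c (j - 1)) * φ j
      = c (n + 1) * φ (n + 1) - c 0 * φ 1 - ∑ j ∈ Icc 1 n, c j * (φ (j + 1) - φ j) := by
  induction n with
  | zero => simp [sub_mul]
  | succ m ih =>
    rw [sum_Icc_succ_top (by omega), ih, sum_Icc_succ_top (by omega), Nat.add_sub_cancel]
    ring

theorem sum_Icc_sub_mul_of_zero_boundary (N : ℕ) {c : ℕ → R} (h₀ : c 0 = 0) (hN : c N = 0)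
    (φ : ℕ → R) :
    ∑ j ∈ Icc 1 N, (c j - c (j - 1)) * φ j = -∑ j ∈ Icc 1 (N - 1), c j * (φ (j + 1) - φ j) := by
  cases N with
  | zero => simp
  | succ n => rw [sum_Icc_sub_mul_eq, h₀, hN, Nat.add_sub_cancel]; ring

end SummationByParts

theorem sum_mul_sum_mul_comm_of_symm {ι R : Type*} [CommSemiring R] (s : Finset ι) (w : ι → R)
    {K : ι → ι → R} (hK : ∀ i j, K i j = K j i) (u v : ι → R) :
    ∑ j ∈ s, w j * ((∑ i ∈ s, w i * K i j * u i) * v j)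
      = ∑ j ∈ s, w j * ((∑ i ∈ s, w i * K i j * v i) * u j) := by
  simp only [sum_mul, mul_sum]
  rw [sum_comm]
  refine sum_congr rfl fun j _ => sum_congr rfl fun i _ => ?_
  rw [hK]
  ring

theorem sub_mul_log_sub_log_nonneg {x y : ℝ} (hx : 0 < x) (hy : 0 < y) :
    0 ≤ (y - x) * (Real.log y - Real.log x) := by
  rcases le_total x y with hxy | hyx
  · exact mul_nonneg (sub_nonneg.2 hxy) (sub_nonneg.2 (Real.log_le_log hx hxy))
  · exact mul_nonneg_of_nonpos_of_nonpos (sub_nonpos.2 hyx)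
      (sub_nonpos.2 (Real.log_le_log hy hyx))

theorem sum_Icc_mul_log_sub_log_nonneg {N : ℕ} {u κ c : ℕ → ℝ} (hu : ∀ j ∈ Icc 1 N, 0 < u j)
    (hκ : ∀ j ∈ Icc 1 (N - 1), 0 ≤ κ j) (hc : ∀ j ∈ Icc 1 (N - 1), c j = κ j * (u (j + 1) - u j)) :
    0 ≤ ∑ j ∈ Icc 1 (N - 1), c j * (Real.log (u (j + 1)) - Real.log (u j)) := by
  refine sum_nonneg fun j hj => ?_
  have hj₀ : j ∈ Icc 1 N := by simp only [mem_Icc] at hj ⊢; omega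
  have hj₁ : j + 1 ∈ Icc 1 N := by simp only [mem_Icc] at hj ⊢; omega
  rw [hc j hj, mul_assoc]
  exact mul_nonneg (hκ j hj) (sub_mul_log_sub_log_nonneg (hu j hj₀) (hu _ hj₁))

section FreeEnergy

variable {ι : Type*} (s : Finset ι) (w : ι → ℝ) {ρ : ℝ → ι → ℝ} {d : ι → ℝ} {S : Set ℝ} {t : ℝ}

theorem hasDerivWithinAt_sum_entropy_potential (V : ι → ℝ) (hρ : ∀ j ∈ s, 0 < ρ t j)
    (hd : ∀ j ∈ s, HasDerivWithinAt (fun τ => ρ τ j) (d j) S t) :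
    HasDerivWithinAt (fun τ => ∑ j ∈ s, w j * (ρ τ j * Real.log (ρ τ j) + V j * ρ τ j))
      (∑ j ∈ s, w j * ((Real.log (ρ t j) + 1 + V j) * d j)) S t := by
  refine HasDerivWithinAt.fun_sum fun j hj => ?_
  have hent := (Real.hasDerivAt_mul_log (hρ j hj).ne').comp_hasDerivWithinAt t (hd j hj)
  exact ((hent.add ((hd j hj).const_mul (V j))).const_mul (w j)).congr_deriv (by ring)

theorem hasDerivWithinAt_interaction_energy {K : ι → ι → ℝ} (hK : ∀ i j, K i j = K j i)
    (hd : ∀ j ∈ s, HasDerivWithinAt (fun τ => ρ τ j) (d j) S t) :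
    HasDerivWithinAt (fun τ => ∑ j ∈ s, w j * (1 / 2 * (∑ i ∈ s, w i * K i j * ρ τ i) * ρ τ j))
      (∑ j ∈ s, w j * ((∑ i ∈ s, w i * K i j * ρ t i) * d j)) S t := by
  have hpotential : ∀ j ∈ s, HasDerivWithinAt (fun τ => ∑ i ∈ s, w i * K i j * ρ τ i)
      (∑ i ∈ s, w i * K i j * d i) S t :=
    fun j _ => HasDerivWithinAt.fun_sum fun i hi => (hd i hi).const_mul _
  refine (HasDerivWithinAt.fun_sum fun j hj =>
    (((hpotential j hj).const_mul (1 / 2)).mul (hd j hj)).const_mul (w j)).congr_deriv ?_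
  calc _ = 1 / 2 * ∑ j ∈ s, w j * ((∑ i ∈ s, w i * K i j * d i) * ρ t j)
        + 1 / 2 * ∑ j ∈ s, w j * ((∑ i ∈ s, w i * K i j * ρ t i) * d j) := by
        rw [mul_sum, mul_sum, ← sum_add_distrib]
        exact sum_congr rfl fun j _ => by ring
    _ = ∑ j ∈ s, w j * ((∑ i ∈ s, w i * K i j * ρ t i) * d j) := by
        rw [sum_mul_sum_mul_comm_of_symm s w hK]; ring

theorem hasDerivWithinAt_free_energy (V : ι → ℝ) {K : ι → ι → ℝ} (hK : ∀ i j, K i j = K j i)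
    (hρ : ∀ j ∈ s, 0 < ρ t j) (hd : ∀ j ∈ s, HasDerivWithinAt (fun τ => ρ τ j) (d j) S t) :
    HasDerivWithinAt (fun τ => ∑ j ∈ s, w j * (ρ τ j * Real.log (ρ τ j) + V j * ρ τ j
        + 1 / 2 * (∑ i ∈ s, w i * K i j * ρ τ i) * ρ τ j))
      (∑ j ∈ s, w j * d j * (Real.log (ρ t j) + 1 + V j + ∑ i ∈ s, w i * K i j * ρ t i)) S t := by
  have h := (hasDerivWithinAt_sum_entropy_potential s w V hρ hd).add
    (hasDerivWithinAt_interaction_energy s w hK hd)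
  simp only [Pi.add_def, ← sum_add_distrib, ← mul_add] at h
  exact h.congr_deriv (sum_congr rfl fun j _ => by ring)

end FreeEnergy

theorem semi_discrete_entropy_dissipation_1d_general
    (N : ℕ)
    (h : ℕ → ℝ) (hpos : ∀ j ∈ Finset.Icc 1 N, 0 < h j)
    (xhalf xc hhalf : ℕ → ℝ)
    (hhhalf : ∀ j ∈ Finset.Icc 1 (N - 1), hhalf j = (h j + h (j + 1)) / 2)
    (V W : ℝ → ℝ)
    (Q : ℝ → (ℕ → ℝ) → ℝ)
    (hQ : ∀ (x : ℝ) (v : ℕ → ℝ), Q x v =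
      Real.exp (-V x - ∑ i ∈ Finset.Icc 1 N, h i * W (xc i - x) * v i))
    (ρ : ℝ → ℕ → ℝ)
    (M Mhalf C : ℝ → ℕ → ℝ)
    (hM : ∀ t : ℝ, ∀ j ∈ Finset.Icc 1 N, M t j = Q (xc j) (ρ t))
    (hMhalf : ∀ t : ℝ, ∀ j ∈ Finset.Icc 1 (N - 1), Mhalf t j = Q (xhalf j) (ρ t))
    (hC : ∀ t : ℝ, ∀ j ∈ Finset.Icc 1 (N - 1),
      C t j = Mhalf t j / hhalf j * (ρ t (j + 1) / M t (j + 1) - ρ t j / M t j))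
    (hC0 : ∀ t : ℝ, C t 0 = 0) (hCN : ∀ t : ℝ, C t N = 0)
    (hode : ∀ j ∈ Finset.Icc 1 N, ∀ t : ℝ, 0 ≤ t →
      HasDerivWithinAt (fun s => ρ s j) ((C t j - C t (j - 1)) / h j) (Set.Ici 0) t)
    (hWsymm : ∀ x : ℝ, W (-x) = W x)
    (hρpos : ∀ t : ℝ, 0 ≤ t → ∀ j ∈ Finset.Icc 1 N, 0 < ρ t j)
    (g : ℝ → ℕ → ℝ)
    (hg : ∀ t : ℝ, ∀ j ∈ Finset.Icc 1 N,
      g t j = ∑ i ∈ Finset.Icc 1 N, h i * W (xc i - xc j) * ρ t i)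
    (E : ℝ → ℝ)
    (hE : ∀ t : ℝ, E t = ∑ j ∈ Finset.Icc 1 N,
      h j * (ρ t j * Real.log (ρ t j) + V (xc j) * ρ t j + 1 / 2 * g t j * ρ t j))
    (I : ℝ → ℝ)
    (hI : ∀ t : ℝ, I t = ∑ j ∈ Finset.Icc 1 (N - 1),
      C t j * (Real.log (ρ t (j + 1) / M t (j + 1)) - Real.log (ρ t j / M t j))) :
    ∀ t : ℝ, 0 ≤ t →
      (∃ E' : ℝ, HasDerivWithinAt E E' (Set.Ici 0) t ∧ E' ≤ -I t) ∧ 0 ≤ I t := by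
  intro t ht
  have hρt := hρpos t ht
  have hMpos : ∀ j ∈ Icc 1 N, 0 < M t j := fun j hj => by
    rw [hM t j hj, hQ]; exact Real.exp_pos _
  have hlogM : ∀ j ∈ Icc 1 N, Real.log (ρ t j / M t j) = Real.log (ρ t j) + V (xc j) + g t j :=
    fun j hj => by
      rw [Real.log_div (hρt j hj).ne' (hMpos j hj).ne', hM t j hj, hQ, Real.log_exp, hg t j hj]
      ring
  have hEeq : E = fun τ => ∑ j ∈ Icc 1 N, h j * (ρ τ j * Real.log (ρ τ j) + V (xc j) * ρ τ j
      + 1 / 2 * (∑ i ∈ Icc 1 N, h i * W (xc i - xc j) * ρ τ i) * ρ τ j) :=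
    funext fun τ => (hE τ).trans (sum_congr rfl fun j hj => by rw [hg τ j hj])
  have hbyparts := sum_Icc_sub_mul_of_zero_boundary N (hC0 t) (hCN t)
    (fun j => Real.log (ρ t j / M t j) + 1)
  simp only [add_sub_add_right_eq_sub] at hbyparts
  refine ⟨⟨_, hEeq ▸ hasDerivWithinAt_free_energy _ h _ (fun i j => by rw [← hWsymm, neg_sub])
    hρt (fun j hj => hode j hj t ht), le_of_eq ?_⟩, ?_⟩
  · rw [hI, ← hbyparts]
    refine sum_congr rfl fun j hj => ?_
    rw [mul_div_cancel₀ _ (hpos j hj).ne', hlogM j hj, hg t j hj]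
    ring
  · rw [hI]
    refine sum_Icc_mul_log_sub_log_nonneg (fun j hj => div_pos (hρt j hj) (hMpos j hj))
      (fun j hj => div_nonneg ?_ ?_) (hC t)
    · rw [hMhalf t j hj, hQ]; exact (Real.exp_pos _).le
    · have := hpos j (by simp only [mem_Icc] at hj ⊢; omega)
      have := hpos (j + 1) (by simp only [mem_Icc] at hj ⊢; omega)
      rw [hhhalf j hj]; linarith

theorem semi_discrete_entropy_dissipation_1d
    (N : ℕ) (hN : 2 ≤ N)
    (h : ℕ → ℝ) (hpos : ∀ j ∈ Finset.Icc 1 N, 0 < h j)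
    (a : ℝ)
    (xhalf xc hhalf : ℕ → ℝ)
    (hxhalf0 : xhalf 0 = a)
    (hxhalf : ∀ j ∈ Finset.Icc 1 N, xhalf j = xhalf (j - 1) + h j)
    (hxc : ∀ j ∈ Finset.Icc 1 N, xc j = xhalf (j - 1) + h j / 2)
    (hhhalf : ∀ j ∈ Finset.Icc 1 (N - 1), hhalf j = (h j + h (j + 1)) / 2)
    (V W : ℝ → ℝ)
    (Q : ℝ → (ℕ → ℝ) → ℝ)
    (hQ : ∀ (x : ℝ) (v : ℕ → ℝ), Q x v =
      Real.exp (-V x - ∑ i ∈ Finset.Icc 1 N, h i * W (xc i - x) * v i))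
    (ρ : ℝ → ℕ → ℝ)
    (M Mhalf C : ℝ → ℕ → ℝ)
    (hM : ∀ t : ℝ, ∀ j ∈ Finset.Icc 1 N, M t j = Q (xc j) (ρ t))
    (hMhalf : ∀ t : ℝ, ∀ j ∈ Finset.Icc 1 (N - 1), Mhalf t j = Q (xhalf j) (ρ t))
    (hC : ∀ t : ℝ, ∀ j ∈ Finset.Icc 1 (N - 1),
      C t j = Mhalf t j / hhalf j * (ρ t (j + 1) / M t (j + 1) - ρ t j / M t j))
    (hC0 : ∀ t : ℝ, C t 0 = 0) (hCN : ∀ t : ℝ, C t N = 0)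
    (hode : ∀ j ∈ Finset.Icc 1 N, ∀ t : ℝ, 0 ≤ t →
      HasDerivWithinAt (fun s => ρ s j) ((C t j - C t (j - 1)) / h j) (Set.Ici 0) t)
    (hWsymm : ∀ x : ℝ, W (-x) = W x)
    (hρpos : ∀ t : ℝ, 0 ≤ t → ∀ j ∈ Finset.Icc 1 N, 0 < ρ t j)
    (g : ℝ → ℕ → ℝ)
    (hg : ∀ t : ℝ, ∀ j ∈ Finset.Icc 1 N,
      g t j = ∑ i ∈ Finset.Icc 1 N, h i * W (xc i - xc j) * ρ t i)
    (E : ℝ → ℝ)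
    (hE : ∀ t : ℝ, E t = ∑ j ∈ Finset.Icc 1 N,
      h j * (ρ t j * Real.log (ρ t j) + V (xc j) * ρ t j + 1 / 2 * g t j * ρ t j))
    (I : ℝ → ℝ)
    (hI : ∀ t : ℝ, I t = ∑ j ∈ Finset.Icc 1 (N - 1),
      C t j * (Real.log (ρ t (j + 1) / M t (j + 1)) - Real.log (ρ t j / M t j))) :
    ∀ t : ℝ, 0 ≤ t →
      (∃ E' : ℝ, HasDerivWithinAt E E' (Set.Ici 0) t ∧ E' ≤ -I t) ∧ 0 ≤ I t :=
  semi_discrete_entropy_dissipation_1d_general N h hpos xhalf xc hhalf hhhalf V W Q hQ ρ M Mhalf C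
    hM hMhalf hC hC0 hCN hode hWsymm hρpos g hg E hE I hI
end

section
/- Unique solvability of the 1D fully discrete implicit-explicit scheme: for any time step τ > 0 and any given state ρ^n ∈ ℝ^N, there exists a unique ρ^{n+1} ∈ ℝ^N satisfying the fully discrete scheme equations. -/
/-!
Writing `ρ = M g` (the Slotboom variable `g = ρ / M`), one step of the scheme becomes the linear
system `h_j M_j g_j / τ - (C_{j+1/2} - C_{j-1/2}) = h_j ρⁿ_j / τ` with fluxes
`C_{j+1/2} = k_j (g_{j+1} - g_j)`, `k_j ≥ 0`, and no flux through the boundary. At a maximum of a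
solution `g` of the homogeneous system both flux differences have the sign that forces
`h_j M_j g_j ≤ 0`, so `g ≤ 0`, and symmetrically `g ≥ 0`: the system is injective, hence, being
finite-dimensional, bijective.
-/

open Finset

section DiffusionOp

variable (N : ℕ) (d k : ℕ → ℝ)

-- `discreteFlux N k g j` is the paper's `C_{j+1/2}`, the flux through the interface `x_{j+1/2}`.
def discreteFlux (g : ℕ → ℝ) (j : ℕ) : ℝ :=
  if j ∈ Icc 1 (N - 1) then k j * (g (j + 1) - g j) else 0

def diffusionOp : (ℕ → ℝ) →ₗ[ℝ] ℕ → ℝ where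
  toFun g j := d j * g j - (discreteFlux N k g j - discreteFlux N k g (j - 1))
  map_add' g g' := by
    funext j
    simp only [discreteFlux, Pi.add_apply]
    split_ifs <;> ring
  map_smul' r g := by
    funext j
    simp only [discreteFlux, Pi.smul_apply, smul_eq_mul, RingHom.id_apply]
    split_ifs <;> ring

lemma diffusionOp_apply (g : ℕ → ℝ) (j : ℕ) :
    diffusionOp N d k g j = d j * g j - (discreteFlux N k g j - discreteFlux N k g (j - 1)) :=
  rfl

variable {N d k} (hd : ∀ j ∈ Icc 1 N, 0 < d j) (hk : ∀ j ∈ Icc 1 (N - 1), 0 ≤ k j)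
include hd hk

lemma nonpos_of_diffusionOp_nonpos {g : ℕ → ℝ} (hg : ∀ j ∈ Icc 1 N, diffusionOp N d k g j ≤ 0) :
    ∀ j ∈ Icc 1 N, g j ≤ 0 := by
  intro j hj
  obtain ⟨m, hm, hmax⟩ := exists_max_image (Icc 1 N) g ⟨j, hj⟩
  have hm' := mem_Icc.1 hm
  have h_out : discreteFlux N k g m ≤ 0 := by
    unfold discreteFlux
    split_ifs with hmi
    · have hm1 := mem_Icc.1 hmi
      exact mul_nonpos_of_nonneg_of_nonpos (hk m hmi)
        (sub_nonpos.2 (hmax (m + 1) (mem_Icc.2 ⟨by omega, by omega⟩)))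
    · exact le_rfl
  have h_in : 0 ≤ discreteFlux N k g (m - 1) := by
    unfold discreteFlux
    split_ifs with hmi
    · have hm1 := mem_Icc.1 hmi
      rw [Nat.sub_add_cancel hm'.1]
      exact mul_nonneg (hk _ hmi) (sub_nonneg.2 (hmax (m - 1) (mem_Icc.2 ⟨by omega, by omega⟩)))
    · exact le_rfl
  have hdm : d m * g m ≤ 0 := by linarith [hg m hm, diffusionOp_apply N d k g m]
  exact (hmax j hj).trans (nonpos_of_mul_nonpos_right hdm (hd m hm))

lemma eqOn_of_diffusionOp_eq {g g' : ℕ → ℝ}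
    (hgg' : ∀ j ∈ Icc 1 N, diffusionOp N d k g j = diffusionOp N d k g' j) :
    ∀ j ∈ Icc 1 N, g j = g' j := by
  have hle {g g'} (hgg' : ∀ j ∈ Icc 1 N, diffusionOp N d k g j = diffusionOp N d k g' j) :
      ∀ j ∈ Icc 1 N, g j ≤ g' j := by
    intro j hj
    have := nonpos_of_diffusionOp_nonpos hd hk (g := g - g')
      (fun i hi => by simp [map_sub, hgg' i hi]) j hj
    simpa [sub_nonpos] using this
  exact fun j hj => le_antisymm (hle hgg' j hj) (hle (fun i hi => (hgg' i hi).symm) j hj)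

lemma exists_diffusionOp_eq (b : ℕ → ℝ) :
    ∃ g : ℕ → ℝ, ∀ j ∈ Icc 1 N, diffusionOp N d k g j = b j := by
  let ι := ↥(Icc 1 N)
  let extend := Function.ExtendByZero.linearMap ℝ (Subtype.val : ι → ℕ)
  have extend_apply (u : ι → ℝ) (i : ι) : extend u i = u i :=
    Subtype.val_injective.extend_apply _ _ _
  let T := LinearMap.funLeft ℝ ℝ (Subtype.val : ι → ℕ) ∘ₗ diffusionOp N d k ∘ₗ extend
  have hT : Function.Injective T := by
    intro u v huv
    funext i
    rw [← extend_apply u, ← extend_apply v]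
    exact eqOn_of_diffusionOp_eq hd hk (fun j hj => congrFun huv ⟨j, hj⟩) i i.2
  obtain ⟨u, hu⟩ := LinearMap.injective_iff_surjective.1 hT (fun i : ι => b i)
  exact ⟨extend u, fun j hj => congrFun hu ⟨j, hj⟩⟩

end DiffusionOp

section Scheme

variable {N : ℕ} {h M k u g : ℕ → ℝ}

lemma eq_discreteFlux_of_eq_mul {F : ℕ → ℝ}
    (hF : ∀ j ∈ Icc 1 (N - 1), F j = k j * (u (j + 1) / M (j + 1) - u j / M j))
    (hF0 : F 0 = 0) (hFN : F N = 0) (hM : ∀ j ∈ Icc 1 N, M j ≠ 0)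
    (hu : ∀ j ∈ Icc 1 N, u j = M j * g j) {j : ℕ} (hj : j ≤ N) :
    F j = discreteFlux N k g j := by
  have hg {i} (hi : i ∈ Icc 1 N) : u i / M i = g i := by
    rw [hu i hi, mul_div_cancel_left₀ _ (hM i hi)]
  unfold discreteFlux
  split_ifs with hji
  · have := mem_Icc.1 hji
    rw [hF j hji, hg (mem_Icc.2 ⟨by omega, by omega⟩), hg (mem_Icc.2 ⟨by omega, by omega⟩)]
  · obtain rfl | rfl : j = 0 ∨ j = N := by simp only [mem_Icc] at hji; omega
    exacts [hF0, hFN]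

lemma scheme_iff_diffusionOp_eq {F : ℕ → ℝ} {ρ : ℕ → ℝ} {τ : ℝ} (hτ : τ ≠ 0)
    (hh : ∀ j ∈ Icc 1 N, h j ≠ 0) (hM : ∀ j ∈ Icc 1 N, M j ≠ 0)
    (hF : ∀ j ∈ Icc 1 (N - 1), F j = k j * (u (j + 1) / M (j + 1) - u j / M j))
    (hF0 : F 0 = 0) (hFN : F N = 0) (hu : ∀ j ∈ Icc 1 N, u j = M j * g j) :
    (∀ j ∈ Icc 1 N, (u j - ρ j) / τ = (F j - F (j - 1)) / h j) ↔
      ∀ j ∈ Icc 1 N, diffusionOp N (fun j => h j * M j / τ) k g j = h j * ρ j / τ := by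
  refine forall₂_congr fun j hj => ?_
  have hjN := (mem_Icc.1 hj).2
  rw [diffusionOp_apply, ← eq_discreteFlux_of_eq_mul hF hF0 hFN hM hu hjN,
    ← eq_discreteFlux_of_eq_mul hF hF0 hFN hM hu (by omega : j - 1 ≤ N), hu j hj,
    div_eq_div_iff hτ (hh j hj)]
  constructor <;> intro H <;> field_simp at * <;> linarith

end Scheme

theorem fully_discrete_unique_solvability_1d_general
    (N : ℕ)
    (h : ℕ → ℝ) (hpos : ∀ j ∈ Finset.Icc 1 N, 0 < h j)
    (xhalf xc hhalf : ℕ → ℝ)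
    (hhhalf : ∀ j ∈ Finset.Icc 1 (N - 1), hhalf j = (h j + h (j + 1)) / 2)
    (V W : ℝ → ℝ)
    (Q : ℝ → (ℕ → ℝ) → ℝ)
    (hQ : ∀ (x : ℝ) (v : ℕ → ℝ), Q x v =
      Real.exp (-V x - ∑ i ∈ Finset.Icc 1 N, h i * W (xc i - x) * v i))
    (ρn : ℕ → ℝ) (τ : ℝ) (hτ : 0 < τ)
    (Mn Mnhalf : ℕ → ℝ)
    (hMn : ∀ j ∈ Finset.Icc 1 N, Mn j = Q (xc j) ρn)
    (hMnhalf : ∀ j ∈ Finset.Icc 1 (N - 1), Mnhalf j = Q (xhalf j) ρn)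
    (Cfun : (ℕ → ℝ) → ℕ → ℝ)
    (hCfun : ∀ u : ℕ → ℝ, ∀ j ∈ Finset.Icc 1 (N - 1),
      Cfun u j = Mnhalf j / hhalf j * (u (j + 1) / Mn (j + 1) - u j / Mn j))
    (hCfun0 : ∀ u : ℕ → ℝ, Cfun u 0 = 0) (hCfunN : ∀ u : ℕ → ℝ, Cfun u N = 0) :
    ∃ ρ1 : ℕ → ℝ,
      (∀ j ∈ Finset.Icc 1 N, (ρ1 j - ρn j) / τ = (Cfun ρ1 j - Cfun ρ1 (j - 1)) / h j) ∧
      ∀ σ : ℕ → ℝ,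
        (∀ j ∈ Finset.Icc 1 N, (σ j - ρn j) / τ = (Cfun σ j - Cfun σ (j - 1)) / h j) →
        ∀ j ∈ Finset.Icc 1 N, σ j = ρ1 j := by
  have hMpos : ∀ j ∈ Icc 1 N, 0 < Mn j := fun j hj => by rw [hMn j hj, hQ]; positivity
  have hd : ∀ j ∈ Icc 1 N, 0 < h j * Mn j / τ := fun j hj =>
    div_pos (mul_pos (hpos j hj) (hMpos j hj)) hτ
  have hk : ∀ j ∈ Icc 1 (N - 1), 0 ≤ Mnhalf j / hhalf j := fun j hj => by
    have := mem_Icc.1 hj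
    have := hpos j (mem_Icc.2 ⟨by omega, by omega⟩)
    have := hpos (j + 1) (mem_Icc.2 ⟨by omega, by omega⟩)
    rw [hMnhalf j hj, hhhalf j hj, hQ]
    positivity
  have hscheme (u g : ℕ → ℝ) (hu : ∀ j ∈ Icc 1 N, u j = Mn j * g j) :=
    scheme_iff_diffusionOp_eq (ρ := ρn) hτ.ne' (fun j hj => (hpos j hj).ne')
      (fun j hj => (hMpos j hj).ne') (hCfun u) (hCfun0 u) (hCfunN u) hu
  obtain ⟨g, hg⟩ := exists_diffusionOp_eq hd hk fun j => h j * ρn j / τ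
  refine ⟨fun j => Mn j * g j, (hscheme _ g fun _ _ => rfl).2 hg, fun σ hσ j hj => ?_⟩
  have hσ_eq : ∀ j ∈ Icc 1 N, σ j = Mn j * (σ j / Mn j) := fun j hj =>
    (mul_div_cancel₀ _ (hMpos j hj).ne').symm
  have hσg := eqOn_of_diffusionOp_eq hd hk
    (fun i hi => ((hscheme σ _ hσ_eq).1 hσ i hi).trans (hg i hi).symm) j hj
  rw [hσ_eq j hj, hσg]

theorem fully_discrete_unique_solvability_1d
    (N : ℕ) (hN : 2 ≤ N)
    (h : ℕ → ℝ) (hpos : ∀ j ∈ Finset.Icc 1 N, 0 < h j)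
    (a : ℝ)
    (xhalf xc hhalf : ℕ → ℝ)
    (hxhalf0 : xhalf 0 = a)
    (hxhalf : ∀ j ∈ Finset.Icc 1 N, xhalf j = xhalf (j - 1) + h j)
    (hxc : ∀ j ∈ Finset.Icc 1 N, xc j = xhalf (j - 1) + h j / 2)
    (hhhalf : ∀ j ∈ Finset.Icc 1 (N - 1), hhalf j = (h j + h (j + 1)) / 2)
    (V W : ℝ → ℝ)
    (Q : ℝ → (ℕ → ℝ) → ℝ)
    (hQ : ∀ (x : ℝ) (v : ℕ → ℝ), Q x v =
      Real.exp (-V x - ∑ i ∈ Finset.Icc 1 N, h i * W (xc i - x) * v i))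
    (ρn : ℕ → ℝ) (τ : ℝ) (hτ : 0 < τ)
    (Mn Mnhalf : ℕ → ℝ)
    (hMn : ∀ j ∈ Finset.Icc 1 N, Mn j = Q (xc j) ρn)
    (hMnhalf : ∀ j ∈ Finset.Icc 1 (N - 1), Mnhalf j = Q (xhalf j) ρn)
    (Cfun : (ℕ → ℝ) → ℕ → ℝ)
    (hCfun : ∀ u : ℕ → ℝ, ∀ j ∈ Finset.Icc 1 (N - 1),
      Cfun u j = Mnhalf j / hhalf j * (u (j + 1) / Mn (j + 1) - u j / Mn j))
    (hCfun0 : ∀ u : ℕ → ℝ, Cfun u 0 = 0) (hCfunN : ∀ u : ℕ → ℝ, Cfun u N = 0) :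
    ∃ ρ1 : ℕ → ℝ,
      (∀ j ∈ Finset.Icc 1 N, (ρ1 j - ρn j) / τ = (Cfun ρ1 j - Cfun ρ1 (j - 1)) / h j) ∧
      ∀ σ : ℕ → ℝ,
        (∀ j ∈ Finset.Icc 1 N, (σ j - ρn j) / τ = (Cfun σ j - Cfun σ (j - 1)) / h j) →
        ∀ j ∈ Finset.Icc 1 N, σ j = ρ1 j :=
  fully_discrete_unique_solvability_1d_general N h hpos xhalf xc hhalf hhhalf V W Q hQ ρn τ hτ Mn
    Mnhalf hMn hMnhalf Cfun hCfun hCfun0 hCfunN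
end

section
/- Positivity preservation for the 1D fully discrete scheme without time step restriction: if ρ^{n+1} ∈ ℝ^N satisfies the fully discrete scheme with data ρ^n ∈ ℝ^N and any τ > 0, and ρ^n_j ≥ 0 for all 1 ≤ j ≤ N, then ρ^{n+1}_j ≥ 0 for all 1 ≤ j ≤ N. -/
/-!
In the Slotboom variable `u = ρ^{n+1} / M^n` each interior flux is a nonnegative multiple of a
difference of `u`, so at a minimum point `m` of `u` the discrete divergence of the flux is
nonnegative. The implicit step then gives `ρ^{n+1}_m ≥ ρ^n_m ≥ 0`, hence `min u ≥ 0`, and since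
`M^n > 0` every `ρ^{n+1}_j = u_j M^n_j` is nonnegative.
-/

section Flux

variable {N m : ℕ} {u κ C : ℕ → ℝ}

lemma flux_nonneg_of_isMin (hκ : ∀ j ∈ Finset.Icc 1 (N - 1), 0 ≤ κ j)
    (hC : ∀ j ∈ Finset.Icc 1 (N - 1), C j = κ j * (u (j + 1) - u j)) (hCN : C N = 0)
    (hm : m ∈ Finset.Icc 1 N) (hmin : ∀ j ∈ Finset.Icc 1 N, u m ≤ u j) : 0 ≤ C m := by
  obtain ⟨hm1, hmN⟩ := Finset.mem_Icc.mp hm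
  rcases hmN.eq_or_lt with rfl | hmN
  · exact hCN.ge
  have hm' : m ∈ Finset.Icc 1 (N - 1) := Finset.mem_Icc.mpr ⟨hm1, by omega⟩
  rw [hC m hm']
  exact mul_nonneg (hκ m hm') (sub_nonneg.2 (hmin (m + 1) (Finset.mem_Icc.mpr ⟨by omega, hmN⟩)))

lemma flux_pred_nonpos_of_isMin (hκ : ∀ j ∈ Finset.Icc 1 (N - 1), 0 ≤ κ j)
    (hC : ∀ j ∈ Finset.Icc 1 (N - 1), C j = κ j * (u (j + 1) - u j)) (hC0 : C 0 = 0)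
    (hm : m ∈ Finset.Icc 1 N) (hmin : ∀ j ∈ Finset.Icc 1 N, u m ≤ u j) : C (m - 1) ≤ 0 := by
  obtain ⟨hm1, hmN⟩ := Finset.mem_Icc.mp hm
  rcases hm1.eq_or_lt with rfl | hm1
  · exact hC0.le
  have hm' : m - 1 ∈ Finset.Icc 1 (N - 1) := Finset.mem_Icc.mpr ⟨by omega, by omega⟩
  rw [hC _ hm', Nat.sub_add_cancel hm1.le]
  exact mul_nonpos_of_nonneg_of_nonpos (hκ _ hm')
    (sub_nonpos.2 (hmin (m - 1) (Finset.mem_Icc.mpr ⟨by omega, by omega⟩)))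

end Flux

lemma nonneg_of_implicit_step {ρ ρ' τ h d : ℝ} (hτ : 0 < τ) (hh : 0 < h) (hρ : 0 ≤ ρ)
    (hstep : (ρ' - ρ) / τ = d / h) (hd : 0 ≤ d) : 0 ≤ ρ' := by
  have : 0 ≤ (ρ' - ρ) / τ := hstep ▸ div_nonneg hd hh.le
  linarith [(le_div_iff₀ hτ).1 this]

theorem fully_discrete_positivity_1d_general
    (N : ℕ)
    (h : ℕ → ℝ) (hpos : ∀ j ∈ Finset.Icc 1 N, 0 < h j)
    (xhalf xc hhalf : ℕ → ℝ)
    (hhhalf : ∀ j ∈ Finset.Icc 1 (N - 1), hhalf j = (h j + h (j + 1)) / 2)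
    (V W : ℝ → ℝ)
    (Q : ℝ → (ℕ → ℝ) → ℝ)
    (hQ : ∀ (x : ℝ) (v : ℕ → ℝ), Q x v =
      Real.exp (-V x - ∑ i ∈ Finset.Icc 1 N, h i * W (xc i - x) * v i))
    (ρn ρ1 : ℕ → ℝ) (τ : ℝ) (hτ : 0 < τ)
    (Mn Mnhalf : ℕ → ℝ)
    (hMn : ∀ j ∈ Finset.Icc 1 N, Mn j = Q (xc j) ρn)
    (hMnhalf : ∀ j ∈ Finset.Icc 1 (N - 1), Mnhalf j = Q (xhalf j) ρn)
    (C : ℕ → ℝ)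
    (hC : ∀ j ∈ Finset.Icc 1 (N - 1),
      C j = Mnhalf j / hhalf j * (ρ1 (j + 1) / Mn (j + 1) - ρ1 j / Mn j))
    (hC0 : C 0 = 0) (hCN : C N = 0)
    (hscheme : ∀ j ∈ Finset.Icc 1 N, (ρ1 j - ρn j) / τ = (C j - C (j - 1)) / h j)
    (hρn : ∀ j ∈ Finset.Icc 1 N, 0 ≤ ρn j) :
    ∀ j ∈ Finset.Icc 1 N, 0 ≤ ρ1 j := by
  have hM : ∀ j ∈ Finset.Icc 1 N, 0 < Mn j := fun j hj => by
    rw [hMn j hj, hQ]; exact Real.exp_pos _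
  have hκ : ∀ j ∈ Finset.Icc 1 (N - 1), 0 ≤ Mnhalf j / hhalf j := fun j hj => by
    obtain ⟨hj1, hjN⟩ := Finset.mem_Icc.mp hj
    have := hpos j (Finset.mem_Icc.mpr ⟨hj1, by omega⟩)
    have := hpos (j + 1) (Finset.mem_Icc.mpr ⟨by omega, by omega⟩)
    rw [hMnhalf j hj, hQ, hhhalf j hj]
    exact div_nonneg (Real.exp_pos _).le (by linarith)
  intro j hj
  set u : ℕ → ℝ := fun i => ρ1 i / Mn i
  obtain ⟨m, hm, hmin⟩ := Finset.exists_min_image (Finset.Icc 1 N) u ⟨j, hj⟩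
  have hρm : 0 ≤ ρ1 m :=
    nonneg_of_implicit_step hτ (hpos m hm) (hρn m hm) (hscheme m hm)
      (sub_nonneg.2 ((flux_pred_nonpos_of_isMin (u := u) hκ hC hC0 hm hmin).trans
        (flux_nonneg_of_isMin (u := u) hκ hC hCN hm hmin)))
  have hu : 0 ≤ ρ1 j / Mn j := (div_nonneg hρm (hM m hm).le).trans (hmin j hj)
  simpa using (le_div_iff₀ (hM j hj)).1 hu

theorem fully_discrete_positivity_1d
    (N : ℕ) (hN : 2 ≤ N)
    (h : ℕ → ℝ) (hpos : ∀ j ∈ Finset.Icc 1 N, 0 < h j)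
    (a : ℝ)
    (xhalf xc hhalf : ℕ → ℝ)
    (hxhalf0 : xhalf 0 = a)
    (hxhalf : ∀ j ∈ Finset.Icc 1 N, xhalf j = xhalf (j - 1) + h j)
    (hxc : ∀ j ∈ Finset.Icc 1 N, xc j = xhalf (j - 1) + h j / 2)
    (hhhalf : ∀ j ∈ Finset.Icc 1 (N - 1), hhalf j = (h j + h (j + 1)) / 2)
    (V W : ℝ → ℝ)
    (Q : ℝ → (ℕ → ℝ) → ℝ)
    (hQ : ∀ (x : ℝ) (v : ℕ → ℝ), Q x v =
      Real.exp (-V x - ∑ i ∈ Finset.Icc 1 N, h i * W (xc i - x) * v i))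
    (ρn ρ1 : ℕ → ℝ) (τ : ℝ) (hτ : 0 < τ)
    (Mn Mnhalf : ℕ → ℝ)
    (hMn : ∀ j ∈ Finset.Icc 1 N, Mn j = Q (xc j) ρn)
    (hMnhalf : ∀ j ∈ Finset.Icc 1 (N - 1), Mnhalf j = Q (xhalf j) ρn)
    (C : ℕ → ℝ)
    (hC : ∀ j ∈ Finset.Icc 1 (N - 1),
      C j = Mnhalf j / hhalf j * (ρ1 (j + 1) / Mn (j + 1) - ρ1 j / Mn j))
    (hC0 : C 0 = 0) (hCN : C N = 0)
    (hscheme : ∀ j ∈ Finset.Icc 1 N, (ρ1 j - ρn j) / τ = (C j - C (j - 1)) / h j)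
    (hρn : ∀ j ∈ Finset.Icc 1 N, 0 ≤ ρn j) :
    ∀ j ∈ Finset.Icc 1 N, 0 ≤ ρ1 j :=
  fully_discrete_positivity_1d_general N h hpos xhalf xc hhalf hhhalf V W Q hQ ρn ρ1 τ hτ Mn Mnhalf
    hMn hMnhalf C hC hC0 hCN hscheme hρn
end

section
/- Entropy production identity for the 1D fully discrete scheme: if ρ^{n+1} ∈ ℝ^N satisfies the fully discrete scheme with data ρ^n ∈ ℝ^N and τ > 0, and ρ^{n+1}_j > 0 for all j, then Σ_{j=1}^N h_j (ρ^{n+1}_j − ρ^n_j) · log(ρ^{n+1}_j/M^n_j) = −τ I^n_h, where I^n_h = Σ_{j=1}^{N−1} C^{n,*}_{j+1/2} (log(ρ^{n+1}_{j+1}/M^n_{j+1}) − log(ρ^{n+1}_j/M^n_j)); moreover I^n_h ≥ 0. -/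
/-!
Multiplying the `j`-th equation of the scheme by `τ h_j log (ρ^{n+1}_j / M^n_j)` and summing by
parts against the no-flux boundary conditions `C_{1/2} = C_{N+1/2} = 0` gives the identity. Each
term of `I^n_h` is a positive multiple of `(b - a)(log b - log a)` with `a, b > 0`, which is
nonnegative since `log` is monotone.
-/

open Finset Real

section SummationByParts

variable {R : Type*} [CommRing R] (C L : ℕ → R)

theorem sum_Icc_sub_mul_eq_of_zero (hC0 : C 0 = 0) (N : ℕ) :
    ∑ j ∈ Icc 1 N, (C j - C (j - 1)) * L j
      = C N * L N - ∑ j ∈ Ico 1 N, C j * (L (j + 1) - L j) := by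
  induction N with
  | zero => simp [hC0]
  | succ n ih =>
    rw [sum_Icc_succ_top (by omega), ih]
    rcases Nat.eq_zero_or_pos n with rfl | hn
    · simp [hC0]
    · rw [sum_Ico_succ_top hn, Nat.add_sub_cancel]
      ring

theorem sum_Icc_sub_mul_eq_neg_sum_mul_sub {N : ℕ} (hC0 : C 0 = 0) (hCN : C N = 0) :
    ∑ j ∈ Icc 1 N, (C j - C (j - 1)) * L j
      = -∑ j ∈ Icc 1 (N - 1), C j * (L (j + 1) - L j) := by
  have hIcc : Icc 1 (N - 1) = Ico 1 N := by
    ext j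
    simp only [mem_Icc, mem_Ico]
    omega
  rw [sum_Icc_sub_mul_eq_of_zero C L hC0, hCN, hIcc, zero_mul, zero_sub]

end SummationByParts

theorem sub_mul_log_sub_log_nonneg_s6 {a b : ℝ} (ha : 0 < a) (hb : 0 < b) :
    0 ≤ (b - a) * (log b - log a) :=
  (monotoneOn_id.monovaryOn strictMonoOn_log.monotoneOn).sub_mul_sub_nonneg
    (Set.mem_Ioi.2 ha) (Set.mem_Ioi.2 hb)

theorem fully_discrete_entropy_production_identity_1d_general
    (N : ℕ)
    (h : ℕ → ℝ) (hpos : ∀ j ∈ Finset.Icc 1 N, 0 < h j)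
    (xhalf xc hhalf : ℕ → ℝ)
    (hhhalf : ∀ j ∈ Finset.Icc 1 (N - 1), hhalf j = (h j + h (j + 1)) / 2)
    (V W : ℝ → ℝ)
    (Q : ℝ → (ℕ → ℝ) → ℝ)
    (hQ : ∀ (x : ℝ) (v : ℕ → ℝ), Q x v =
      Real.exp (-V x - ∑ i ∈ Finset.Icc 1 N, h i * W (xc i - x) * v i))
    (ρn ρ1 : ℕ → ℝ) (τ : ℝ) (hτ : 0 < τ)
    (Mn Mnhalf : ℕ → ℝ)
    (hMn : ∀ j ∈ Finset.Icc 1 N, Mn j = Q (xc j) ρn)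
    (hMnhalf : ∀ j ∈ Finset.Icc 1 (N - 1), Mnhalf j = Q (xhalf j) ρn)
    (C : ℕ → ℝ)
    (hC : ∀ j ∈ Finset.Icc 1 (N - 1),
      C j = Mnhalf j / hhalf j * (ρ1 (j + 1) / Mn (j + 1) - ρ1 j / Mn j))
    (hC0 : C 0 = 0) (hCN : C N = 0)
    (hscheme : ∀ j ∈ Finset.Icc 1 N, (ρ1 j - ρn j) / τ = (C j - C (j - 1)) / h j)
    (hρ1pos : ∀ j ∈ Finset.Icc 1 N, 0 < ρ1 j)
    (Ih : ℝ)
    (hIh : Ih = ∑ j ∈ Finset.Icc 1 (N - 1),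
      C j * (Real.log (ρ1 (j + 1) / Mn (j + 1)) - Real.log (ρ1 j / Mn j))) :
    (∑ j ∈ Finset.Icc 1 N, h j * (ρ1 j - ρn j) * Real.log (ρ1 j / Mn j)) = -τ * Ih ∧
      0 ≤ Ih := by
  have hM : ∀ j ∈ Icc 1 N, 0 < Mn j := fun j hj => by rw [hMn j hj, hQ]; exact exp_pos _
  have hflux : ∀ j ∈ Icc 1 N, h j * (ρ1 j - ρn j) = τ * (C j - C (j - 1)) := by
    intro j hj
    have := hscheme j hj
    rw [div_eq_div_iff hτ.ne' (hpos j hj).ne'] at this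
    linarith
  refine ⟨?_, ?_⟩
  · rw [sum_congr rfl fun j hj => by rw [hflux j hj, mul_assoc], ← mul_sum,
      sum_Icc_sub_mul_eq_neg_sum_mul_sub C _ hC0 hCN, hIh, mul_neg, neg_mul]
  · rw [hIh]
    refine sum_nonneg fun j hj => ?_
    obtain ⟨hj1, hjN⟩ := mem_Icc.1 hj
    have hl : j ∈ Icc 1 N := mem_Icc.2 ⟨hj1, by omega⟩
    have hr : j + 1 ∈ Icc 1 N := mem_Icc.2 ⟨by omega, by omega⟩
    have hweight : 0 < Mnhalf j / hhalf j := by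
      rw [hMnhalf j hj, hQ, hhhalf j hj]
      have := hpos j hl
      have := hpos (j + 1) hr
      positivity
    rw [hC j hj, mul_assoc]
    exact mul_nonneg hweight.le <| sub_mul_log_sub_log_nonneg_s6
      (div_pos (hρ1pos j hl) (hM j hl)) (div_pos (hρ1pos _ hr) (hM _ hr))

theorem fully_discrete_entropy_production_identity_1d
    (N : ℕ) (hN : 2 ≤ N)
    (h : ℕ → ℝ) (hpos : ∀ j ∈ Finset.Icc 1 N, 0 < h j)
    (a : ℝ)
    (xhalf xc hhalf : ℕ → ℝ)
    (hxhalf0 : xhalf 0 = a)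
    (hxhalf : ∀ j ∈ Finset.Icc 1 N, xhalf j = xhalf (j - 1) + h j)
    (hxc : ∀ j ∈ Finset.Icc 1 N, xc j = xhalf (j - 1) + h j / 2)
    (hhhalf : ∀ j ∈ Finset.Icc 1 (N - 1), hhalf j = (h j + h (j + 1)) / 2)
    (V W : ℝ → ℝ)
    (Q : ℝ → (ℕ → ℝ) → ℝ)
    (hQ : ∀ (x : ℝ) (v : ℕ → ℝ), Q x v =
      Real.exp (-V x - ∑ i ∈ Finset.Icc 1 N, h i * W (xc i - x) * v i))
    (ρn ρ1 : ℕ → ℝ) (τ : ℝ) (hτ : 0 < τ)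
    (Mn Mnhalf : ℕ → ℝ)
    (hMn : ∀ j ∈ Finset.Icc 1 N, Mn j = Q (xc j) ρn)
    (hMnhalf : ∀ j ∈ Finset.Icc 1 (N - 1), Mnhalf j = Q (xhalf j) ρn)
    (C : ℕ → ℝ)
    (hC : ∀ j ∈ Finset.Icc 1 (N - 1),
      C j = Mnhalf j / hhalf j * (ρ1 (j + 1) / Mn (j + 1) - ρ1 j / Mn j))
    (hC0 : C 0 = 0) (hCN : C N = 0)
    (hscheme : ∀ j ∈ Finset.Icc 1 N, (ρ1 j - ρn j) / τ = (C j - C (j - 1)) / h j)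
    (hρ1pos : ∀ j ∈ Finset.Icc 1 N, 0 < ρ1 j)
    (Ih : ℝ)
    (hIh : Ih = ∑ j ∈ Finset.Icc 1 (N - 1),
      C j * (Real.log (ρ1 (j + 1) / Mn (j + 1)) - Real.log (ρ1 j / Mn j))) :
    (∑ j ∈ Finset.Icc 1 N, h j * (ρ1 j - ρn j) * Real.log (ρ1 j / Mn j)) = -τ * Ih ∧
      0 ≤ Ih :=
  fully_discrete_entropy_production_identity_1d_general N h hpos xhalf xc hhalf hhhalf V W Q hQ ρn
    ρ1 τ hτ Mn Mnhalf hMn hMnhalf C hC hC0 hCN hscheme hρ1pos Ih hIh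
end

section
/- Positivity preservation for the 2D semi-discrete scheme: if ρ : [0,∞) → ℝ^{N_x×N_y} is a solution of the 2D semi-discrete scheme and ρ_{i,j}(0) ≥ 0 for all i, j, then ρ_{i,j}(t) ≥ 0 for all t ≥ 0 and all i, j. -/
/-!
At a fixed time the right-hand side of the scheme is linear in `ρ`, with nonnegative off-diagonal
coefficients (`Mxh / (hxhalf · M)` and its analogues) whose row sums depend continuously on `t`
and are therefore bounded by some `K` on `[0, T]`. If `ρ + ε e^{(K+1)t}` had a first zero at
`(t₀, p)`, then at `t₀` all components of `ρ` are `≥ -η` and `ρ_p = -η`, so `ρ_p' ≥ -K η`, and the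
perturbed component would increase through zero, contradicting the first crossing. Letting
`ε → 0` gives `ρ ≥ 0`.
-/

open Set

lemma HasDerivWithinAt.nonpos_of_isMinOn_Icc {f : ℝ → ℝ} {f' a b : ℝ} (hab : a < b)
    (hf : HasDerivWithinAt f f' (Icc a b) b) (hmin : IsMinOn f (Icc a b) b) : f' ≤ 0 := by
  have hseg : segment ℝ b (b + -(b - a)) ⊆ Icc a b := by
    rw [segment_eq_uIcc, show b + -(b - a) = a by ring, uIcc_of_ge hab.le]
  have := hmin.localize.hasFDerivWithinAt_nonneg hf.hasFDerivWithinAt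
    (mem_posTangentConeAt_of_segment_subset hseg)
  simp only [neg_sub, ContinuousLinearMap.toSpanSingleton_apply, smul_eq_mul] at this
  exact nonpos_of_mul_nonneg_right this (sub_neg.2 hab)

lemma IsCompact.exists_forall_le_of_continuousOn_finset {α ι : Type*} [TopologicalSpace α]
    {X : Set α} (hX : IsCompact X) {s : Finset ι} {f : α → ι → ℝ}
    (hf : ∀ i ∈ s, ContinuousOn (fun x => f x i) X) : ∃ K, ∀ x ∈ X, ∀ i ∈ s, f x i ≤ K := by
  obtain ⟨K, hK⟩ := s.finite_toSet.bddAbove_biUnion.2 fun i hi => hX.bddAbove_image (hf i hi)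
  exact ⟨K, fun x hx i hi => hK (mem_biUnion hi (mem_image_of_mem _ hx))⟩

lemma exists_first_zero {ι : Type*} {s : Finset ι} {φ : ℝ → ι → ℝ} {T : ℝ}
    (hφ : ∀ i ∈ s, ContinuousOn (fun t => φ t i) (Icc 0 T)) (h0 : ∀ i ∈ s, 0 < φ 0 i)
    (hneg : ∃ t ∈ Icc 0 T, ∃ i ∈ s, φ t i ≤ 0) :
    ∃ t₀ ∈ Ioc 0 T, (∀ i ∈ s, ∀ t ∈ Icc 0 t₀, 0 ≤ φ t i) ∧ ∃ i ∈ s, φ t₀ i = 0 := by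
  set S := ⋃ i ∈ s, Icc 0 T ∩ (fun t => φ t i) ⁻¹' Iic 0
  have hS : IsClosed S := isClosed_biUnion_finset fun i hi =>
    (hφ i hi).preimage_isClosed_of_isClosed isClosed_Icc isClosed_Iic
  have hSbdd : BddBelow S := ⟨0, fun t ht => by
    obtain ⟨i, -, ht, -⟩ := mem_iUnion₂.1 ht; exact ht.1⟩
  have hSne : S.Nonempty := by
    obtain ⟨t, ht, i, hi, hφt⟩ := hneg; exact ⟨t, mem_iUnion₂.2 ⟨i, hi, ht, hφt⟩⟩
  obtain ⟨i, hi, ht₀, hφi⟩ := mem_iUnion₂.1 (hS.csInf_mem hSne hSbdd)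
  set t₀ := sInf S
  have ht₀pos : 0 < t₀ := lt_of_le_of_ne ht₀.1 fun h => by
    rw [← h] at hφi; exact (h0 i hi).not_ge hφi
  have hbefore : ∀ k ∈ s, ∀ t ∈ Ico 0 t₀, 0 ≤ φ t k := fun k hk t ht => by
    by_contra! h
    exact (csInf_le hSbdd (mem_iUnion₂.2 ⟨k, hk, ⟨ht.1, ht.2.le.trans ht₀.2⟩, h.le⟩)).not_gt ht.2
  have hnonneg : ∀ k ∈ s, ∀ t ∈ Icc 0 t₀, 0 ≤ φ t k := fun k hk => by
    have hclosed : IsClosed (Icc 0 t₀ ∩ (fun t => φ t k) ⁻¹' Ici 0) :=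
      ((hφ k hk).mono (Icc_subset_Icc_right ht₀.2)).preimage_isClosed_of_isClosed
        isClosed_Icc isClosed_Ici
    have := hclosed.closure_subset_iff.2 fun t ht => ⟨Ico_subset_Icc_self ht, hbefore k hk t ht⟩
    rw [closure_Ico ht₀pos.ne] at this
    exact fun t ht => (this ht).2
  exact ⟨t₀, ⟨ht₀pos, ht₀.2⟩, hnonneg,
    i, hi, le_antisymm hφi (hnonneg i hi t₀ ⟨ht₀.1, le_rfl⟩)⟩

theorem nonneg_of_hasDerivWithinAt_of_quasiPositive {ι : Type*} {s : Finset ι}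
    {u u' κ : ℝ → ι → ℝ} {T : ℝ}
    (hu : ∀ i ∈ s, ∀ t ∈ Icc 0 T, HasDerivWithinAt (fun τ => u τ i) (u' t i) (Icc 0 T) t)
    (hκ : ∀ i ∈ s, ContinuousOn (fun t => κ t i) (Icc 0 T))
    (hquasi : ∀ t ∈ Icc 0 T, ∀ η > 0, (∀ k ∈ s, -η ≤ u t k) →
      ∀ i ∈ s, u t i = -η → -(κ t i * η) ≤ u' t i)
    (h0 : ∀ i ∈ s, 0 ≤ u 0 i) :
    ∀ t ∈ Icc 0 T, ∀ i ∈ s, 0 ≤ u t i := by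
  obtain ⟨K, hK⟩ := isCompact_Icc.exists_forall_le_of_continuousOn_finset hκ
  suffices key : ∀ ε > 0, ∀ t ∈ Icc 0 T, ∀ i ∈ s, 0 < u t i + ε * Real.exp ((K + 1) * t) by
    intro t ht i hi
    refine le_of_forall_pos_lt_add fun δ hδ => ?_
    simpa [div_mul_cancel₀ _ (Real.exp_pos _).ne'] using
      key (δ / Real.exp ((K + 1) * t)) (by positivity) t ht i hi
  intro ε hε
  by_contra! hneg
  have hcont : ∀ i ∈ s, ContinuousOn (fun t => u t i + ε * Real.exp ((K + 1) * t)) (Icc 0 T) :=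
    fun i hi => (HasDerivWithinAt.continuousOn fun t ht => hu i hi t ht).add (by fun_prop)
  obtain ⟨t₀, ht₀, hnonneg, i, hi, hzero⟩ :=
    exists_first_zero hcont (fun i hi => by simpa using add_pos_of_nonneg_of_pos (h0 i hi) hε) hneg
  set η := ε * Real.exp ((K + 1) * t₀) with hη_def
  have hη : 0 < η := by positivity
  have hexp : HasDerivAt (fun t => ε * Real.exp ((K + 1) * t)) ((K + 1) * η) t₀ :=
    (((hasDerivAt_id' t₀).const_mul (K + 1)).exp.const_mul ε).congr_deriv (by rw [hη_def]; ring)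
  have hderiv := ((hu i hi t₀ ⟨ht₀.1.le, ht₀.2⟩).mono (Icc_subset_Icc_right ht₀.2)).add
    hexp.hasDerivWithinAt
  have hle := hderiv.nonpos_of_isMinOn_Icc ht₀.1 <| isMinOn_iff.2 fun t ht => by
    simp only [Pi.add_apply]; linarith [hnonneg i hi t ht]
  have hge := hquasi t₀ ⟨ht₀.1.le, ht₀.2⟩ η hη
    (fun k hk => by linarith [hnonneg k hk t₀ ⟨ht₀.1.le, le_rfl⟩]) i hi (by linarith)
  linarith [mul_le_mul_of_nonneg_right (hK t₀ ⟨ht₀.1.le, ht₀.2⟩ i hi) hη.le]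

/-- Row sum of the off-diagonal coefficients of `ρ ↦ F i - F (i - 1)` for the 1D flux
`F k = w k * (ρ (k + 1) / M (k + 1) - ρ k / M k)` through the face `k + 1/2`, with no flux through
the boundary faces `0` and `N`. -/
noncomputable def offDiagCoeff (N : ℕ) (w M : ℕ → ℝ) (i : ℕ) : ℝ :=
  (if i < N then w i / M (i + 1) else 0) + (if 1 < i then w (i - 1) / M (i - 1) else 0)

lemma neg_div_mul_le_mul_sub {w ρ' M' M η : ℝ} (hw : 0 ≤ w) (hM' : 0 < M') (hM : 0 < M)
    (hρ' : -η ≤ ρ') (hη : 0 ≤ η) : -(w / M' * η) ≤ w * (ρ' / M' - -η / M) := by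
  have hρ'M' : -η / M' ≤ ρ' / M' := div_le_div_of_nonneg_right hρ' hM'.le
  have hηM : 0 ≤ η / M := div_nonneg hη hM.le
  calc -(w / M' * η) = w * (-η / M') := by ring
    _ ≤ w * (ρ' / M' - -η / M) := by
      gcongr
      linarith [neg_div M η]

lemma neg_offDiagCoeff_div_mul_le_div {N i : ℕ} {F w ρ M : ℕ → ℝ} {h η : ℝ}
    (hi : i ∈ Finset.Icc 1 N) (hF0 : F 0 = 0) (hFN : F N = 0)
    (hF : ∀ k ∈ Finset.Icc 1 (N - 1), F k = w k * (ρ (k + 1) / M (k + 1) - ρ k / M k))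
    (hw : ∀ k ∈ Finset.Icc 1 (N - 1), 0 ≤ w k) (hM : ∀ k ∈ Finset.Icc 1 N, 0 < M k)
    (hρ : ∀ k ∈ Finset.Icc 1 N, -η ≤ ρ k) (hρi : ρ i = -η) (hη : 0 ≤ η) (hh : 0 < h) :
    -(offDiagCoeff N w M i / h * η) ≤ (F i - F (i - 1)) / h := by
  rw [Finset.mem_Icc] at hi
  have hright : -((if i < N then w i / M (i + 1) else 0) * η) ≤ F i := by
    split_ifs with hcase
    · have hk : i ∈ Finset.Icc 1 (N - 1) := Finset.mem_Icc.2 ⟨hi.1, by omega⟩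
      have hk' : i + 1 ∈ Finset.Icc 1 N := Finset.mem_Icc.2 ⟨by omega, hcase⟩
      rw [hF i hk, hρi]
      exact neg_div_mul_le_mul_sub (hw i hk) (hM _ hk') (hM i (Finset.mem_Icc.2 hi)) (hρ _ hk') hη
    · rw [show i = N by omega, hFN]; simp
  have hleft : -((if 1 < i then w (i - 1) / M (i - 1) else 0) * η) ≤ -F (i - 1) := by
    split_ifs with hcase
    · have hk : i - 1 ∈ Finset.Icc 1 (N - 1) := Finset.mem_Icc.2 ⟨by omega, by omega⟩
      have hk' : i - 1 ∈ Finset.Icc 1 N := Finset.mem_Icc.2 ⟨by omega, by omega⟩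
      have := neg_div_mul_le_mul_sub (hw _ hk) (hM _ hk') (hM i (Finset.mem_Icc.2 hi)) (hρ _ hk') hη
      rw [hF _ hk, Nat.sub_add_cancel hi.1, hρi]
      linarith
    · rw [show i - 1 = 0 by omega, hF0]; simp
  rw [div_mul_eq_mul_div, ← neg_div]
  refine div_le_div_of_nonneg_right ?_ hh.le
  rw [offDiagCoeff]
  linarith

lemma continuousOn_offDiagCoeff {α : Type*} [TopologicalSpace α] {X : Set α} {N i : ℕ}
    {w M : α → ℕ → ℝ} (hw : ∀ k ∈ Finset.Icc 1 (N - 1), ContinuousOn (fun x => w x k) X)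
    (hM : ∀ k ∈ Finset.Icc 1 N, ContinuousOn (fun x => M x k) X)
    (hM0 : ∀ x ∈ X, ∀ k ∈ Finset.Icc 1 N, M x k ≠ 0) (hi : i ∈ Finset.Icc 1 N) :
    ContinuousOn (fun x => offDiagCoeff N (w x) (M x) i) X := by
  rw [Finset.mem_Icc] at hi
  refine ContinuousOn.add ?_ ?_
  · by_cases h : i < N
    · have hk : i ∈ Finset.Icc 1 (N - 1) := Finset.mem_Icc.2 ⟨hi.1, by omega⟩
      have hk' : i + 1 ∈ Finset.Icc 1 N := Finset.mem_Icc.2 ⟨by omega, h⟩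
      simpa only [h, if_true] using (hw i hk).div₀ (hM _ hk') fun x hx => hM0 x hx _ hk'
    · simpa only [h, if_false] using continuousOn_const
  · by_cases h : 1 < i
    · have hk : i - 1 ∈ Finset.Icc 1 (N - 1) := Finset.mem_Icc.2 ⟨by omega, by omega⟩
      have hk' : i - 1 ∈ Finset.Icc 1 N := Finset.mem_Icc.2 ⟨by omega, by omega⟩
      simpa only [h, if_true] using (hw _ hk).div₀ (hM _ hk') fun x hx => hM0 x hx _ hk'
    · simpa only [h, if_false] using continuousOn_const

lemma pos_of_eq_avg {N : ℕ} {g h : ℕ → ℝ}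
    (hg : ∀ k ∈ Finset.Icc 1 (N - 1), g k = (h k + h (k + 1)) / 2)
    (hh : ∀ k ∈ Finset.Icc 1 N, 0 < h k) : ∀ k ∈ Finset.Icc 1 (N - 1), 0 < g k := fun k hk => by
  have := hh k (Finset.Icc_subset_Icc_right (Nat.sub_le _ _) hk)
  have := hh (k + 1) (by simp only [Finset.mem_Icc] at hk ⊢; omega)
  rw [hg k hk]; linarith

theorem semi_discrete_positivity_2d_general
    (Nx Ny : ℕ)
    (hx : ℕ → ℝ) (hxpos : ∀ i ∈ Finset.Icc 1 Nx, 0 < hx i)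
    (hy : ℕ → ℝ) (hypos : ∀ j ∈ Finset.Icc 1 Ny, 0 < hy j)
    (xhalf xc hxhalf : ℕ → ℝ) (yhalf yc hyhalf : ℕ → ℝ)
    (hhxhalf : ∀ i ∈ Finset.Icc 1 (Nx - 1), hxhalf i = (hx i + hx (i + 1)) / 2)
    (hhyhalf : ∀ j ∈ Finset.Icc 1 (Ny - 1), hyhalf j = (hy j + hy (j + 1)) / 2)
    (V W : ℝ → ℝ → ℝ)
    (Q : ℝ → ℝ → (ℕ → ℕ → ℝ) → ℝ)
    (hQ : ∀ (x y : ℝ) (v : ℕ → ℕ → ℝ), Q x y v =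
      Real.exp (-V x y - ∑ k ∈ Finset.Icc 1 Nx, ∑ l ∈ Finset.Icc 1 Ny,
        hx k * hy l * W (xc k - x) (yc l - y) * v k l))
    (ρ : ℝ → ℕ → ℕ → ℝ)
    (M Mxh Myh Cx Cy : ℝ → ℕ → ℕ → ℝ)
    (hM : ∀ t : ℝ, ∀ i ∈ Finset.Icc 1 Nx, ∀ j ∈ Finset.Icc 1 Ny,
      M t i j = Q (xc i) (yc j) (ρ t))
    (hMxh : ∀ t : ℝ, ∀ i ∈ Finset.Icc 1 (Nx - 1), ∀ j ∈ Finset.Icc 1 Ny,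
      Mxh t i j = Q (xhalf i) (yc j) (ρ t))
    (hMyh : ∀ t : ℝ, ∀ i ∈ Finset.Icc 1 Nx, ∀ j ∈ Finset.Icc 1 (Ny - 1),
      Myh t i j = Q (xc i) (yhalf j) (ρ t))
    (hCx : ∀ t : ℝ, ∀ i ∈ Finset.Icc 1 (Nx - 1), ∀ j ∈ Finset.Icc 1 Ny,
      Cx t i j = Mxh t i j / hxhalf i * (ρ t (i + 1) j / M t (i + 1) j - ρ t i j / M t i j))
    (hCy : ∀ t : ℝ, ∀ i ∈ Finset.Icc 1 Nx, ∀ j ∈ Finset.Icc 1 (Ny - 1),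
      Cy t i j = Myh t i j / hyhalf j * (ρ t i (j + 1) / M t i (j + 1) - ρ t i j / M t i j))
    (hCx0 : ∀ t : ℝ, ∀ j : ℕ, Cx t 0 j = 0) (hCxN : ∀ t : ℝ, ∀ j : ℕ, Cx t Nx j = 0)
    (hCy0 : ∀ t : ℝ, ∀ i : ℕ, Cy t i 0 = 0) (hCyN : ∀ t : ℝ, ∀ i : ℕ, Cy t i Ny = 0)
    (hode : ∀ i ∈ Finset.Icc 1 Nx, ∀ j ∈ Finset.Icc 1 Ny, ∀ t : ℝ, 0 ≤ t →
      HasDerivWithinAt (fun s => ρ s i j)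
        ((Cx t i j - Cx t (i - 1) j) / hx i + (Cy t i j - Cy t i (j - 1)) / hy j)
        (Set.Ici 0) t)
    (hinit : ∀ i ∈ Finset.Icc 1 Nx, ∀ j ∈ Finset.Icc 1 Ny, 0 ≤ ρ 0 i j) :
    ∀ t : ℝ, 0 ≤ t → ∀ i ∈ Finset.Icc 1 Nx, ∀ j ∈ Finset.Icc 1 Ny, 0 ≤ ρ t i j := by
  intro T hT i hi j hj
  have hQpos : ∀ x y v, 0 < Q x y v := fun x y v => hQ x y v ▸ Real.exp_pos _
  have hρ : ∀ k ∈ Finset.Icc 1 Nx, ∀ l ∈ Finset.Icc 1 Ny, ∀ t ∈ Icc 0 T,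
      HasDerivWithinAt (fun s => ρ s k l) ((Cx t k l - Cx t (k - 1) l) / hx k
        + (Cy t k l - Cy t k (l - 1)) / hy l) (Icc 0 T) t :=
    fun k hk l hl t ht => (hode k hk l hl t ht.1).mono Icc_subset_Ici_self
  have hQcont : ∀ x y, ContinuousOn (fun t => Q x y (ρ t)) (Icc 0 T) := fun x y => by
    simp only [hQ]
    exact (continuousOn_const.sub (continuousOn_finsetSum _ fun k hk =>
      continuousOn_finsetSum _ fun l hl =>
        continuousOn_const.mul (HasDerivWithinAt.continuousOn (hρ k hk l hl)))).rexp
  have hxh := pos_of_eq_avg hhxhalf hxpos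
  have hyh := pos_of_eq_avg hhyhalf hypos
  refine nonneg_of_hasDerivWithinAt_of_quasiPositive (s := Finset.Icc 1 Nx ×ˢ Finset.Icc 1 Ny)
    (u := fun t p => ρ t p.1 p.2) (u' := fun t p => (Cx t p.1 p.2 - Cx t (p.1 - 1) p.2) / hx p.1
      + (Cy t p.1 p.2 - Cy t p.1 (p.2 - 1)) / hy p.2)
    (κ := fun t p =>
      offDiagCoeff Nx (fun k => Mxh t k p.2 / hxhalf k) (fun k => M t k p.2) p.1 / hx p.1
      + offDiagCoeff Ny (fun l => Myh t p.1 l / hyhalf l) (fun l => M t p.1 l) p.2 / hy p.2)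
    ?_ ?_ ?_ ?_ T ⟨hT, le_rfl⟩ (i, j) (Finset.mk_mem_product hi hj)
  · rintro ⟨k, l⟩ hkl t ht
    obtain ⟨hk, hl⟩ := Finset.mem_product.1 hkl
    exact hρ k hk l hl t ht
  · rintro ⟨k, l⟩ hkl
    obtain ⟨hk, hl⟩ := Finset.mem_product.1 hkl
    refine ((continuousOn_offDiagCoeff ?_ ?_ ?_ hk).div_const _).add
      ((continuousOn_offDiagCoeff ?_ ?_ ?_ hl).div_const _)
    · exact fun m hm => ((hQcont _ _).congr fun t _ => hMxh t m hm l hl).div_const _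
    · exact fun m hm => (hQcont _ _).congr fun t _ => hM t m hm l hl
    · exact fun t _ m hm => (hM t m hm l hl ▸ hQpos _ _ _).ne'
    · exact fun m hm => ((hQcont _ _).congr fun t _ => hMyh t k hk m hm).div_const _
    · exact fun m hm => (hQcont _ _).congr fun t _ => hM t k hk m hm
    · exact fun t _ m hm => (hM t k hk m hm ▸ hQpos _ _ _).ne'
  · rintro t - η hη hge ⟨k, l⟩ hkl hρkl
    obtain ⟨hk, hl⟩ := Finset.mem_product.1 hkl
    have hxdir := neg_offDiagCoeff_div_mul_le_div hk (hCx0 t l) (hCxN t l)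
      (fun m hm => hCx t m hm l hl)
      (fun m hm => (div_pos (hMxh t m hm l hl ▸ hQpos _ _ _) (hxh m hm)).le)
      (fun m hm => hM t m hm l hl ▸ hQpos _ _ _)
      (fun m hm => hge (m, l) (Finset.mk_mem_product hm hl)) hρkl hη.le (hxpos k hk)
    have hydir := neg_offDiagCoeff_div_mul_le_div hl (hCy0 t k) (hCyN t k)
      (fun m hm => hCy t k hk m hm)
      (fun m hm => (div_pos (hMyh t k hk m hm ▸ hQpos _ _ _) (hyh m hm)).le)
      (fun m hm => hM t k hk m hm ▸ hQpos _ _ _)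
      (fun m hm => hge (k, m) (Finset.mk_mem_product hk hm)) hρkl hη.le (hypos l hl)
    linarith
  · rintro ⟨k, l⟩ hkl
    obtain ⟨hk, hl⟩ := Finset.mem_product.1 hkl
    exact hinit k hk l hl

theorem semi_discrete_positivity_2d
    (Nx Ny : ℕ) (hNx : 2 ≤ Nx) (hNy : 2 ≤ Ny)
    (hx : ℕ → ℝ) (hxpos : ∀ i ∈ Finset.Icc 1 Nx, 0 < hx i)
    (hy : ℕ → ℝ) (hypos : ∀ j ∈ Finset.Icc 1 Ny, 0 < hy j)
    (a c : ℝ)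
    (xhalf xc hxhalf : ℕ → ℝ) (yhalf yc hyhalf : ℕ → ℝ)
    (hxhalf0 : xhalf 0 = a)
    (hxhalfdef : ∀ i ∈ Finset.Icc 1 Nx, xhalf i = xhalf (i - 1) + hx i)
    (hxcdef : ∀ i ∈ Finset.Icc 1 Nx, xc i = xhalf (i - 1) + hx i / 2)
    (hhxhalf : ∀ i ∈ Finset.Icc 1 (Nx - 1), hxhalf i = (hx i + hx (i + 1)) / 2)
    (hyhalf0 : yhalf 0 = c)
    (hyhalfdef : ∀ j ∈ Finset.Icc 1 Ny, yhalf j = yhalf (j - 1) + hy j)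
    (hycdef : ∀ j ∈ Finset.Icc 1 Ny, yc j = yhalf (j - 1) + hy j / 2)
    (hhyhalf : ∀ j ∈ Finset.Icc 1 (Ny - 1), hyhalf j = (hy j + hy (j + 1)) / 2)
    (V W : ℝ → ℝ → ℝ)
    (Q : ℝ → ℝ → (ℕ → ℕ → ℝ) → ℝ)
    (hQ : ∀ (x y : ℝ) (v : ℕ → ℕ → ℝ), Q x y v =
      Real.exp (-V x y - ∑ k ∈ Finset.Icc 1 Nx, ∑ l ∈ Finset.Icc 1 Ny,
        hx k * hy l * W (xc k - x) (yc l - y) * v k l))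
    (ρ : ℝ → ℕ → ℕ → ℝ)
    (M Mxh Myh Cx Cy : ℝ → ℕ → ℕ → ℝ)
    (hM : ∀ t : ℝ, ∀ i ∈ Finset.Icc 1 Nx, ∀ j ∈ Finset.Icc 1 Ny,
      M t i j = Q (xc i) (yc j) (ρ t))
    (hMxh : ∀ t : ℝ, ∀ i ∈ Finset.Icc 1 (Nx - 1), ∀ j ∈ Finset.Icc 1 Ny,
      Mxh t i j = Q (xhalf i) (yc j) (ρ t))
    (hMyh : ∀ t : ℝ, ∀ i ∈ Finset.Icc 1 Nx, ∀ j ∈ Finset.Icc 1 (Ny - 1),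
      Myh t i j = Q (xc i) (yhalf j) (ρ t))
    (hCx : ∀ t : ℝ, ∀ i ∈ Finset.Icc 1 (Nx - 1), ∀ j ∈ Finset.Icc 1 Ny,
      Cx t i j = Mxh t i j / hxhalf i * (ρ t (i + 1) j / M t (i + 1) j - ρ t i j / M t i j))
    (hCy : ∀ t : ℝ, ∀ i ∈ Finset.Icc 1 Nx, ∀ j ∈ Finset.Icc 1 (Ny - 1),
      Cy t i j = Myh t i j / hyhalf j * (ρ t i (j + 1) / M t i (j + 1) - ρ t i j / M t i j))
    (hCx0 : ∀ t : ℝ, ∀ j : ℕ, Cx t 0 j = 0) (hCxN : ∀ t : ℝ, ∀ j : ℕ, Cx t Nx j = 0)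
    (hCy0 : ∀ t : ℝ, ∀ i : ℕ, Cy t i 0 = 0) (hCyN : ∀ t : ℝ, ∀ i : ℕ, Cy t i Ny = 0)
    (hode : ∀ i ∈ Finset.Icc 1 Nx, ∀ j ∈ Finset.Icc 1 Ny, ∀ t : ℝ, 0 ≤ t →
      HasDerivWithinAt (fun s => ρ s i j)
        ((Cx t i j - Cx t (i - 1) j) / hx i + (Cy t i j - Cy t i (j - 1)) / hy j)
        (Set.Ici 0) t)
    (hinit : ∀ i ∈ Finset.Icc 1 Nx, ∀ j ∈ Finset.Icc 1 Ny, 0 ≤ ρ 0 i j) :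
    ∀ t : ℝ, 0 ≤ t → ∀ i ∈ Finset.Icc 1 Nx, ∀ j ∈ Finset.Icc 1 Ny, 0 ≤ ρ t i j :=
  semi_discrete_positivity_2d_general Nx Ny hx hxpos hy hypos xhalf xc hxhalf yhalf yc hyhalf
    hhxhalf hhyhalf V W Q hQ ρ M Mxh Myh Cx Cy hM hMxh hMyh hCx hCy hCx0 hCxN hCy0 hCyN hode hinit
end

section
/- Entropy dissipation for the 2D semi-discrete scheme: assume W is symmetric (W(−x, −y) = W(x, y) for all x, y ∈ ℝ) and let ρ : [0,∞) → ℝ^{N_x×N_y} be a solution of the 2D semi-discrete scheme with ρ_{i,j}(t) > 0 for all i, j and t ≥ 0. Then for every t ≥ 0 the discrete free energy E_h is differentiable at t with E_h'(t) ≤ −I_h(t), and moreover I_h(t) ≥ 0, where E_h(t) = Σ_{i=1}^{N_x} Σ_{j=1}^{N_y} h^x_i h^y_j (ρ_{i,j}(t) log ρ_{i,j}(t) + V(x_i, y_j) ρ_{i,j}(t) + (1/2) g_{i,j}(t) ρ_{i,j}(t)) with g_{i,j}(t) = Σ_{k=1}^{N_x} Σ_{l=1}^{N_y} h^x_k h^y_l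 W(x_k − x_i, y_l − y_j) ρ_{k,l}(t), and I_h(t) = Σ_{j=1}^{N_y} Σ_{i=1}^{N_x−1} h^y_j C_{i+1/2,j}(t) (log(ρ_{i+1,j}(t)/M_{i+1,j}(t)) − log(ρ_{i,j}(t)/M_{i,j}(t))) + Σ_{i=1}^{N_x} Σ_{j=1}^{N_y−1} h^x_i C_{i,j+1/2}(t) (log(ρ_{i,j+1}(t)/M_{i,j+1}(t)) − log(ρ_{i,j}(t)/M_{i,j}(t))). -/
/-!
Differentiating the free energy gives `E' = ∑ hˣᵢ hʸⱼ ρ'ᵢⱼ (log ρᵢⱼ + V(xᵢ, yⱼ) + gᵢⱼ + 1)`: the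
symmetry of `W` makes the two halves of the derivative of the quadratic interaction term equal.
Since `Mᵢⱼ = exp (-V(xᵢ, yⱼ) - gᵢⱼ)`, the bracket is `log (ρᵢⱼ / Mᵢⱼ) + 1`, and since `ρ'` is the
discrete divergence of fluxes vanishing on the boundary, summation by parts turns `E'` into `-I`.
Each term of `I` is a nonnegative multiple of `(b - a) (log b - log a) ≥ 0`, where `a` and `b` are
neighbouring values of `ρ / M`.
-/

open Finset

section SummationByParts

variable {R : Type*} [CommRing R]

theorem sum_Icc_sub_mul_by_parts (f φ : ℕ → R) {N : ℕ} (hN : 1 ≤ N) :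
    ∑ i ∈ Icc 1 N, (f i - f (i - 1)) * φ i =
      f N * φ N - f 0 * φ 1 - ∑ i ∈ Icc 1 (N - 1), f i * (φ (i + 1) - φ i) := by
  induction N, hN using Nat.le_induction with
  | base => simp; ring
  | succ N hN ih =>
    obtain ⟨m, rfl⟩ : ∃ m, N = m + 1 := ⟨N - 1, by omega⟩
    rw [sum_Icc_succ_top (by omega), ih, Nat.add_sub_cancel, Nat.add_sub_cancel,
      sum_Icc_succ_top (by omega)]
    ring

theorem sum_Icc_sub_mul_by_parts_of_eq_zero (f φ : ℕ → R) {N : ℕ} (h0 : f 0 = 0) (hN : f N = 0) :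
    ∑ i ∈ Icc 1 N, (f i - f (i - 1)) * φ i = -∑ i ∈ Icc 1 (N - 1), f i * (φ (i + 1) - φ i) := by
  rcases Nat.eq_zero_or_pos N with rfl | hN1
  · simp
  · rw [sum_Icc_sub_mul_by_parts f φ hN1, h0, hN]
    ring

end SummationByParts

theorem sum_sum_mul_fluxDiv_by_parts {Nx Ny : ℕ} {hx hy : ℕ → ℝ}
    (hx0 : ∀ i ∈ Icc 1 Nx, hx i ≠ 0) (hy0 : ∀ j ∈ Icc 1 Ny, hy j ≠ 0) {Cx Cy : ℕ → ℕ → ℝ}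
    (hCx0 : ∀ j, Cx 0 j = 0) (hCxN : ∀ j, Cx Nx j = 0)
    (hCy0 : ∀ i, Cy i 0 = 0) (hCyN : ∀ i, Cy i Ny = 0) (ψ : ℕ → ℕ → ℝ) :
    ∑ i ∈ Icc 1 Nx, ∑ j ∈ Icc 1 Ny,
        hx i * hy j * ((Cx i j - Cx (i - 1) j) / hx i + (Cy i j - Cy i (j - 1)) / hy j) * ψ i j =
      -((∑ j ∈ Icc 1 Ny, ∑ i ∈ Icc 1 (Nx - 1), hy j * Cx i j * (ψ (i + 1) j - ψ i j)) +
        ∑ i ∈ Icc 1 Nx, ∑ j ∈ Icc 1 (Ny - 1), hx i * Cy i j * (ψ i (j + 1) - ψ i j)) := by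
  have hsplit : ∀ i ∈ Icc 1 Nx, ∀ j ∈ Icc 1 Ny,
      hx i * hy j * ((Cx i j - Cx (i - 1) j) / hx i + (Cy i j - Cy i (j - 1)) / hy j) * ψ i j =
        hy j * ((Cx i j - Cx (i - 1) j) * ψ i j) + hx i * ((Cy i j - Cy i (j - 1)) * ψ i j) := by
    intro i hi j hj
    field_simp [hx0 i hi, hy0 j hj]
  have hrow_x : ∀ j, ∑ i ∈ Icc 1 Nx, hy j * ((Cx i j - Cx (i - 1) j) * ψ i j) =
      -∑ i ∈ Icc 1 (Nx - 1), hy j * Cx i j * (ψ (i + 1) j - ψ i j) := fun j => by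
    rw [← mul_sum, sum_Icc_sub_mul_by_parts_of_eq_zero (Cx · j) (ψ · j) (hCx0 j) (hCxN j),
      mul_neg, mul_sum]
    simp only [mul_assoc]
  have hcol_y : ∀ i, ∑ j ∈ Icc 1 Ny, hx i * ((Cy i j - Cy i (j - 1)) * ψ i j) =
      -∑ j ∈ Icc 1 (Ny - 1), hx i * Cy i j * (ψ i (j + 1) - ψ i j) := fun i => by
    rw [← mul_sum, sum_Icc_sub_mul_by_parts_of_eq_zero (Cy i) (ψ i) (hCy0 i) (hCyN i),
      mul_neg, mul_sum]
    simp only [mul_assoc]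
  rw [sum_congr rfl fun i hi => sum_congr rfl fun j hj => hsplit i hi j hj]
  simp only [sum_add_distrib]
  rw [sum_comm]
  simp only [hrow_x, hcol_y, sum_neg_distrib, neg_add]

theorem sum_mul_flux_mul_log_sub_nonneg {N : ℕ} {w : ℝ} {κ u C : ℕ → ℝ} (hw : 0 ≤ w)
    (hκ : ∀ i ∈ Icc 1 (N - 1), 0 ≤ κ i) (hu : ∀ i ∈ Icc 1 N, 0 < u i)
    (hC : ∀ i ∈ Icc 1 (N - 1), C i = κ i * (u (i + 1) - u i)) :
    0 ≤ ∑ i ∈ Icc 1 (N - 1), w * C i * (Real.log (u (i + 1)) - Real.log (u i)) := by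
  refine sum_nonneg fun i hi => ?_
  have hi' := mem_Icc.1 hi
  rw [hC i hi, mul_assoc, mul_assoc]
  exact mul_nonneg hw (mul_nonneg (hκ i hi)
    ((monotoneOn_id.monovaryOn Real.strictMonoOn_log.monotoneOn).sub_mul_sub_nonneg
      (hu i (mem_Icc.2 ⟨hi'.1, by omega⟩)) (hu (i + 1) (mem_Icc.2 ⟨by omega, by omega⟩))))

theorem avg_succ_pos {N : ℕ} {h h' : ℕ → ℝ} (hpos : ∀ i ∈ Icc 1 N, 0 < h i)
    (hdef : ∀ i ∈ Icc 1 (N - 1), h' i = (h i + h (i + 1)) / 2) :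
    ∀ i ∈ Icc 1 (N - 1), 0 < h' i := by
  intro i hi
  have hi' := mem_Icc.1 hi
  rw [hdef i hi]
  have := hpos i (mem_Icc.2 ⟨hi'.1, by omega⟩)
  have := hpos (i + 1) (mem_Icc.2 ⟨by omega, by omega⟩)
  positivity

section FreeEnergy

variable {ι : Type*} {S : Finset ι} {K : ι → ι → ℝ}

theorem sum_mul_sum_kernel_comm (hK : ∀ p q, K p q = K q p) (w a b : ι → ℝ) :
    ∑ p ∈ S, w p * a p * ∑ q ∈ S, w q * K p q * b q =
      ∑ p ∈ S, w p * b p * ∑ q ∈ S, w q * K p q * a q := by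
  simp only [mul_sum]
  rw [sum_comm]
  refine sum_congr rfl fun p _ => sum_congr rfl fun q _ => ?_
  rw [hK]
  ring

variable {w V : ι → ℝ} {u : ℝ → ι → ℝ} {u' : ι → ℝ} {s : Set ℝ} {t : ℝ}

theorem hasDerivWithinAt_interactionEnergy (hK : ∀ p q, K p q = K q p)
    (hu : ∀ p ∈ S, HasDerivWithinAt (u · p) (u' p) s t) :
    HasDerivWithinAt (fun τ => ∑ p ∈ S, w p * (1 / 2 * (∑ q ∈ S, w q * K p q * u τ q) * u τ p))
      (∑ p ∈ S, w p * u' p * ∑ q ∈ S, w q * K p q * u t q) s t := by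
  have hpot : ∀ p ∈ S, HasDerivWithinAt (fun τ => ∑ q ∈ S, w q * K p q * u τ q)
      (∑ q ∈ S, w q * K p q * u' q) s t := fun p _ =>
    HasDerivWithinAt.fun_sum fun q hq => (hu q hq).const_mul _
  refine (HasDerivWithinAt.fun_sum fun p hp =>
    (((hpot p hp).const_mul (1 / 2)).mul (hu p hp)).const_mul (w p)).congr_deriv ?_
  have hswap := sum_mul_sum_kernel_comm (S := S) hK w (u t) u'
  calc _ = ∑ p ∈ S, (1 / 2 * (w p * u t p * ∑ q ∈ S, w q * K p q * u' q) +
        1 / 2 * (w p * u' p * ∑ q ∈ S, w q * K p q * u t q)) := sum_congr rfl fun p _ => by ring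
    _ = _ := by rw [sum_add_distrib, ← mul_sum, ← mul_sum, hswap]; ring

theorem hasDerivWithinAt_freeEnergy (hK : ∀ p q, K p q = K q p) {g : ℝ → ι → ℝ}
    (hg : ∀ τ, ∀ p ∈ S, g τ p = ∑ q ∈ S, w q * K p q * u τ q)
    (hu : ∀ p ∈ S, HasDerivWithinAt (u · p) (u' p) s t) (hu0 : ∀ p ∈ S, u t p ≠ 0) :
    HasDerivWithinAt
      (fun τ => ∑ p ∈ S, w p * (u τ p * Real.log (u τ p) + V p * u τ p + 1 / 2 * g τ p * u τ p))
      (∑ p ∈ S, w p * u' p * (Real.log (u t p) + V p + g t p + 1)) s t := by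
  have hentropy : ∀ p ∈ S, HasDerivWithinAt
      (fun τ => w p * (u τ p * Real.log (u τ p) + V p * u τ p))
      (w p * u' p * (Real.log (u t p) + V p + 1)) s t := fun p hp => by
    have hmul_log : HasDerivWithinAt (fun τ => u τ p * Real.log (u τ p))
        ((Real.log (u t p) + 1) * u' p) s t :=
      (Real.hasDerivAt_mul_log (hu0 p hp)).comp_hasDerivWithinAt (h := (u · p)) t (hu p hp)
    exact ((hmul_log.add ((hu p hp).const_mul (V p))).const_mul (w p)).congr_deriv (by ring)
  have henergy := (HasDerivWithinAt.fun_sum hentropy).add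
    (hasDerivWithinAt_interactionEnergy (w := w) hK hu)
  refine (henergy.congr (fun τ _ => ?_) ?_).congr_deriv ?_
  all_goals
    simp only [Pi.add_apply, ← sum_add_distrib]
    refine sum_congr rfl fun p hp => ?_
    rw [hg _ p hp]
    ring

end FreeEnergy

theorem semi_discrete_entropy_dissipation_2d_general
    (Nx Ny : ℕ)
    (hx : ℕ → ℝ) (hxpos : ∀ i ∈ Finset.Icc 1 Nx, 0 < hx i)
    (hy : ℕ → ℝ) (hypos : ∀ j ∈ Finset.Icc 1 Ny, 0 < hy j)
    (xhalf xc hxhalf : ℕ → ℝ) (yhalf yc hyhalf : ℕ → ℝ)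
    (hhxhalf : ∀ i ∈ Finset.Icc 1 (Nx - 1), hxhalf i = (hx i + hx (i + 1)) / 2)
    (hhyhalf : ∀ j ∈ Finset.Icc 1 (Ny - 1), hyhalf j = (hy j + hy (j + 1)) / 2)
    (V W : ℝ → ℝ → ℝ)
    (Q : ℝ → ℝ → (ℕ → ℕ → ℝ) → ℝ)
    (hQ : ∀ (x y : ℝ) (v : ℕ → ℕ → ℝ), Q x y v =
      Real.exp (-V x y - ∑ k ∈ Finset.Icc 1 Nx, ∑ l ∈ Finset.Icc 1 Ny,
        hx k * hy l * W (xc k - x) (yc l - y) * v k l))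
    (ρ : ℝ → ℕ → ℕ → ℝ)
    (M Mxh Myh Cx Cy : ℝ → ℕ → ℕ → ℝ)
    (hM : ∀ t : ℝ, ∀ i ∈ Finset.Icc 1 Nx, ∀ j ∈ Finset.Icc 1 Ny,
      M t i j = Q (xc i) (yc j) (ρ t))
    (hMxh : ∀ t : ℝ, ∀ i ∈ Finset.Icc 1 (Nx - 1), ∀ j ∈ Finset.Icc 1 Ny,
      Mxh t i j = Q (xhalf i) (yc j) (ρ t))
    (hMyh : ∀ t : ℝ, ∀ i ∈ Finset.Icc 1 Nx, ∀ j ∈ Finset.Icc 1 (Ny - 1),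
      Myh t i j = Q (xc i) (yhalf j) (ρ t))
    (hCx : ∀ t : ℝ, ∀ i ∈ Finset.Icc 1 (Nx - 1), ∀ j ∈ Finset.Icc 1 Ny,
      Cx t i j = Mxh t i j / hxhalf i * (ρ t (i + 1) j / M t (i + 1) j - ρ t i j / M t i j))
    (hCy : ∀ t : ℝ, ∀ i ∈ Finset.Icc 1 Nx, ∀ j ∈ Finset.Icc 1 (Ny - 1),
      Cy t i j = Myh t i j / hyhalf j * (ρ t i (j + 1) / M t i (j + 1) - ρ t i j / M t i j))
    (hCx0 : ∀ t : ℝ, ∀ j : ℕ, Cx t 0 j = 0) (hCxN : ∀ t : ℝ, ∀ j : ℕ, Cx t Nx j = 0)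
    (hCy0 : ∀ t : ℝ, ∀ i : ℕ, Cy t i 0 = 0) (hCyN : ∀ t : ℝ, ∀ i : ℕ, Cy t i Ny = 0)
    (hode : ∀ i ∈ Finset.Icc 1 Nx, ∀ j ∈ Finset.Icc 1 Ny, ∀ t : ℝ, 0 ≤ t →
      HasDerivWithinAt (fun s => ρ s i j)
        ((Cx t i j - Cx t (i - 1) j) / hx i + (Cy t i j - Cy t i (j - 1)) / hy j)
        (Set.Ici 0) t)
    (hWsymm : ∀ x y : ℝ, W (-x) (-y) = W x y)
    (hρpos : ∀ t : ℝ, 0 ≤ t → ∀ i ∈ Finset.Icc 1 Nx, ∀ j ∈ Finset.Icc 1 Ny, 0 < ρ t i j)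
    (g : ℝ → ℕ → ℕ → ℝ)
    (hg : ∀ t : ℝ, ∀ i ∈ Finset.Icc 1 Nx, ∀ j ∈ Finset.Icc 1 Ny,
      g t i j = ∑ k ∈ Finset.Icc 1 Nx, ∑ l ∈ Finset.Icc 1 Ny,
        hx k * hy l * W (xc k - xc i) (yc l - yc j) * ρ t k l)
    (E : ℝ → ℝ)
    (hE : ∀ t : ℝ, E t = ∑ i ∈ Finset.Icc 1 Nx, ∑ j ∈ Finset.Icc 1 Ny,
      hx i * hy j * (ρ t i j * Real.log (ρ t i j) + V (xc i) (yc j) * ρ t i j +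
        1 / 2 * g t i j * ρ t i j))
    (I : ℝ → ℝ)
    (hI : ∀ t : ℝ, I t =
      (∑ j ∈ Finset.Icc 1 Ny, ∑ i ∈ Finset.Icc 1 (Nx - 1),
        hy j * Cx t i j * (Real.log (ρ t (i + 1) j / M t (i + 1) j) -
          Real.log (ρ t i j / M t i j))) +
      ∑ i ∈ Finset.Icc 1 Nx, ∑ j ∈ Finset.Icc 1 (Ny - 1),
        hx i * Cy t i j * (Real.log (ρ t i (j + 1) / M t i (j + 1)) -
          Real.log (ρ t i j / M t i j))) :
    ∀ t : ℝ, 0 ≤ t →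
      (∃ E' : ℝ, HasDerivWithinAt E E' (Set.Ici 0) t ∧ E' ≤ -I t) ∧ 0 ≤ I t := by
  intro t ht
  have hQ_pos : ∀ x y v, 0 < Q x y v := fun x y v => (hQ x y v).symm ▸ Real.exp_pos _
  have hratio_pos : ∀ i ∈ Icc 1 Nx, ∀ j ∈ Icc 1 Ny, 0 < ρ t i j / M t i j :=
    fun i hi j hj => div_pos (hρpos t ht i hi j hj) (hM t i hi j hj ▸ hQ_pos _ _ _)
  have hlog_ratio : ∀ i ∈ Icc 1 Nx, ∀ j ∈ Icc 1 Ny,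
      Real.log (ρ t i j / M t i j) = Real.log (ρ t i j) + V (xc i) (yc j) + g t i j := by
    intro i hi j hj
    rw [hM t i hi j hj, hQ, ← hg t i hi j hj,
      Real.log_div (hρpos t ht i hi j hj).ne' (Real.exp_pos _).ne', Real.log_exp]
    ring
  have hE_deriv := hasDerivWithinAt_freeEnergy (S := Icc 1 Nx ×ˢ Icc 1 Ny)
    (w := fun p => hx p.1 * hy p.2) (V := fun p => V (xc p.1) (yc p.2))
    (K := fun p q => W (xc q.1 - xc p.1) (yc q.2 - yc p.2)) (u := fun τ p => ρ τ p.1 p.2)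
    (g := fun τ p => g τ p.1 p.2)
    (fun p q => by simpa only [neg_sub] using (hWsymm (xc q.1 - xc p.1) (yc q.2 - yc p.2)).symm)
    (fun τ p hp => by rw [sum_product]; exact hg τ _ (mem_product.1 hp).1 _ (mem_product.1 hp).2)
    (fun p hp => hode _ (mem_product.1 hp).1 _ (mem_product.1 hp).2 t ht)
    (fun p hp => (hρpos t ht _ (mem_product.1 hp).1 _ (mem_product.1 hp).2).ne')
  simp only [sum_product] at hE_deriv
  have hdissipation := sum_sum_mul_fluxDiv_by_parts (fun i hi => (hxpos i hi).ne')
    (fun j hj => (hypos j hj).ne') (hCx0 t) (hCxN t) (hCy0 t) (hCyN t)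
    (fun i j => Real.log (ρ t i j / M t i j) + 1)
  simp only [add_sub_add_right_eq_sub] at hdissipation
  rw [show E = _ from funext hE]
  refine ⟨⟨_, hE_deriv, le_of_eq ?_⟩, ?_⟩
  · rw [hI, ← hdissipation]
    exact sum_congr rfl fun i hi => sum_congr rfl fun j hj => by rw [hlog_ratio i hi j hj]
  · have hxhalf_pos := avg_succ_pos hxpos hhxhalf
    have hyhalf_pos := avg_succ_pos hypos hhyhalf
    rw [hI]
    refine add_nonneg (sum_nonneg fun j hj => ?_) (sum_nonneg fun i hi => ?_)
    · exact sum_mul_flux_mul_log_sub_nonneg (u := fun i => ρ t i j / M t i j) (hypos j hj).le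
        (fun i hi => div_nonneg (hMxh t i hi j hj ▸ hQ_pos _ _ _).le (hxhalf_pos i hi).le)
        (fun i hi => hratio_pos i hi j hj) (fun i hi => hCx t i hi j hj)
    · exact sum_mul_flux_mul_log_sub_nonneg (u := fun j => ρ t i j / M t i j) (hxpos i hi).le
        (fun j hj => div_nonneg (hMyh t i hi j hj ▸ hQ_pos _ _ _).le (hyhalf_pos j hj).le)
        (fun j hj => hratio_pos i hi j hj) (fun j hj => hCy t i hi j hj)

theorem semi_discrete_entropy_dissipation_2d
    (Nx Ny : ℕ) (hNx : 2 ≤ Nx) (hNy : 2 ≤ Ny)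
    (hx : ℕ → ℝ) (hxpos : ∀ i ∈ Finset.Icc 1 Nx, 0 < hx i)
    (hy : ℕ → ℝ) (hypos : ∀ j ∈ Finset.Icc 1 Ny, 0 < hy j)
    (a c : ℝ)
    (xhalf xc hxhalf : ℕ → ℝ) (yhalf yc hyhalf : ℕ → ℝ)
    (hxhalf0 : xhalf 0 = a)
    (hxhalfdef : ∀ i ∈ Finset.Icc 1 Nx, xhalf i = xhalf (i - 1) + hx i)
    (hxcdef : ∀ i ∈ Finset.Icc 1 Nx, xc i = xhalf (i - 1) + hx i / 2)
    (hhxhalf : ∀ i ∈ Finset.Icc 1 (Nx - 1), hxhalf i = (hx i + hx (i + 1)) / 2)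
    (hyhalf0 : yhalf 0 = c)
    (hyhalfdef : ∀ j ∈ Finset.Icc 1 Ny, yhalf j = yhalf (j - 1) + hy j)
    (hycdef : ∀ j ∈ Finset.Icc 1 Ny, yc j = yhalf (j - 1) + hy j / 2)
    (hhyhalf : ∀ j ∈ Finset.Icc 1 (Ny - 1), hyhalf j = (hy j + hy (j + 1)) / 2)
    (V W : ℝ → ℝ → ℝ)
    (Q : ℝ → ℝ → (ℕ → ℕ → ℝ) → ℝ)
    (hQ : ∀ (x y : ℝ) (v : ℕ → ℕ → ℝ), Q x y v =
      Real.exp (-V x y - ∑ k ∈ Finset.Icc 1 Nx, ∑ l ∈ Finset.Icc 1 Ny,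
        hx k * hy l * W (xc k - x) (yc l - y) * v k l))
    (ρ : ℝ → ℕ → ℕ → ℝ)
    (M Mxh Myh Cx Cy : ℝ → ℕ → ℕ → ℝ)
    (hM : ∀ t : ℝ, ∀ i ∈ Finset.Icc 1 Nx, ∀ j ∈ Finset.Icc 1 Ny,
      M t i j = Q (xc i) (yc j) (ρ t))
    (hMxh : ∀ t : ℝ, ∀ i ∈ Finset.Icc 1 (Nx - 1), ∀ j ∈ Finset.Icc 1 Ny,
      Mxh t i j = Q (xhalf i) (yc j) (ρ t))
    (hMyh : ∀ t : ℝ, ∀ i ∈ Finset.Icc 1 Nx, ∀ j ∈ Finset.Icc 1 (Ny - 1),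
      Myh t i j = Q (xc i) (yhalf j) (ρ t))
    (hCx : ∀ t : ℝ, ∀ i ∈ Finset.Icc 1 (Nx - 1), ∀ j ∈ Finset.Icc 1 Ny,
      Cx t i j = Mxh t i j / hxhalf i * (ρ t (i + 1) j / M t (i + 1) j - ρ t i j / M t i j))
    (hCy : ∀ t : ℝ, ∀ i ∈ Finset.Icc 1 Nx, ∀ j ∈ Finset.Icc 1 (Ny - 1),
      Cy t i j = Myh t i j / hyhalf j * (ρ t i (j + 1) / M t i (j + 1) - ρ t i j / M t i j))
    (hCx0 : ∀ t : ℝ, ∀ j : ℕ, Cx t 0 j = 0) (hCxN : ∀ t : ℝ, ∀ j : ℕ, Cx t Nx j = 0)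
    (hCy0 : ∀ t : ℝ, ∀ i : ℕ, Cy t i 0 = 0) (hCyN : ∀ t : ℝ, ∀ i : ℕ, Cy t i Ny = 0)
    (hode : ∀ i ∈ Finset.Icc 1 Nx, ∀ j ∈ Finset.Icc 1 Ny, ∀ t : ℝ, 0 ≤ t →
      HasDerivWithinAt (fun s => ρ s i j)
        ((Cx t i j - Cx t (i - 1) j) / hx i + (Cy t i j - Cy t i (j - 1)) / hy j)
        (Set.Ici 0) t)
    (hWsymm : ∀ x y : ℝ, W (-x) (-y) = W x y)
    (hρpos : ∀ t : ℝ, 0 ≤ t → ∀ i ∈ Finset.Icc 1 Nx, ∀ j ∈ Finset.Icc 1 Ny, 0 < ρ t i j)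
    (g : ℝ → ℕ → ℕ → ℝ)
    (hg : ∀ t : ℝ, ∀ i ∈ Finset.Icc 1 Nx, ∀ j ∈ Finset.Icc 1 Ny,
      g t i j = ∑ k ∈ Finset.Icc 1 Nx, ∑ l ∈ Finset.Icc 1 Ny,
        hx k * hy l * W (xc k - xc i) (yc l - yc j) * ρ t k l)
    (E : ℝ → ℝ)
    (hE : ∀ t : ℝ, E t = ∑ i ∈ Finset.Icc 1 Nx, ∑ j ∈ Finset.Icc 1 Ny,
      hx i * hy j * (ρ t i j * Real.log (ρ t i j) + V (xc i) (yc j) * ρ t i j +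
        1 / 2 * g t i j * ρ t i j))
    (I : ℝ → ℝ)
    (hI : ∀ t : ℝ, I t =
      (∑ j ∈ Finset.Icc 1 Ny, ∑ i ∈ Finset.Icc 1 (Nx - 1),
        hy j * Cx t i j * (Real.log (ρ t (i + 1) j / M t (i + 1) j) -
          Real.log (ρ t i j / M t i j))) +
      ∑ i ∈ Finset.Icc 1 Nx, ∑ j ∈ Finset.Icc 1 (Ny - 1),
        hx i * Cy t i j * (Real.log (ρ t i (j + 1) / M t i (j + 1)) -
          Real.log (ρ t i j / M t i j))) :
    ∀ t : ℝ, 0 ≤ t →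
      (∃ E' : ℝ, HasDerivWithinAt E E' (Set.Ici 0) t ∧ E' ≤ -I t) ∧ 0 ≤ I t :=
  semi_discrete_entropy_dissipation_2d_general Nx Ny hx hxpos hy hypos xhalf xc hxhalf yhalf yc
    hyhalf hhxhalf hhyhalf V W Q hQ ρ M Mxh Myh Cx Cy hM hMxh hMyh hCx hCy hCx0 hCxN hCy0 hCyN hode
    hWsymm hρpos g hg E hE I hI
end

section
/- Positivity preservation for the 2D fully discrete scheme without time step restriction: if ρ^{n+1} ∈ ℝ^{N_x×N_y} satisfies the 2D fully discrete scheme with data ρ^n ∈ ℝ^{N_x×N_y} and any τ > 0, and ρ^n_{i,j} ≥ 0 for all i, j, then ρ^{n+1}_{i,j} ≥ 0 for all i, j. -/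
/-!
Discrete minimum principle for the Slotboom variable `u = ρ^{n+1} / M^n`. Every flux is a positive
multiple of a difference of `u`, so at a minimiser of `u` over the grid all outgoing fluxes are
nonnegative and all incoming ones nonpositive. The scheme then gives `ρ^{n+1} ≥ ρ^n ≥ 0` there, so
`min u ≥ 0`, and `ρ^{n+1} = u M^n ≥ 0` everywhere since `M^n` is an exponential.
-/

open Finset

lemma midpoint_step_pos {N : ℕ} {h hMid : ℕ → ℝ} (hpos : ∀ i ∈ Icc 1 N, 0 < h i)
    (hMidDef : ∀ i ∈ Icc 1 (N - 1), hMid i = (h i + h (i + 1)) / 2) :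
    ∀ i ∈ Icc 1 (N - 1), 0 < hMid i := by
  intro i hi
  have hi' := mem_Icc.mp hi
  rw [hMidDef i hi]
  have := hpos i (mem_Icc.mpr (by omega))
  have := hpos (i + 1) (mem_Icc.mpr (by omega))
  positivity

section Flux

variable {N i₀ : ℕ} {F k u : ℕ → ℝ}

lemma flux_nonneg_of_isMinOn (hFN : F N = 0)
    (hF : ∀ i ∈ Icc 1 (N - 1), F i = k i * (u (i + 1) - u i))
    (hk : ∀ i ∈ Icc 1 (N - 1), 0 ≤ k i) (hmin : IsMinOn u (Icc 1 N) i₀) (hi₀ : i₀ ∈ Icc 1 N) :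
    0 ≤ F i₀ := by
  have hi₀' := mem_Icc.mp hi₀
  rcases eq_or_ne i₀ N with rfl | _
  · exact hFN.ge
  · have hi : i₀ ∈ Icc 1 (N - 1) := mem_Icc.mpr (by omega)
    have hle : u i₀ ≤ u (i₀ + 1) := isMinOn_iff.mp hmin _ (by simp only [coe_Icc, Set.mem_Icc]; omega)
    rw [hF i₀ hi]
    exact mul_nonneg (hk i₀ hi) (sub_nonneg.mpr hle)

lemma flux_pred_nonpos_of_isMinOn (hF0 : F 0 = 0)
    (hF : ∀ i ∈ Icc 1 (N - 1), F i = k i * (u (i + 1) - u i))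
    (hk : ∀ i ∈ Icc 1 (N - 1), 0 ≤ k i) (hmin : IsMinOn u (Icc 1 N) i₀) (hi₀ : i₀ ∈ Icc 1 N) :
    F (i₀ - 1) ≤ 0 := by
  have hi₀' := mem_Icc.mp hi₀
  rcases eq_or_ne i₀ 1 with rfl | _
  · exact hF0.le
  · have hi : i₀ - 1 ∈ Icc 1 (N - 1) := mem_Icc.mpr (by omega)
    have hle : u i₀ ≤ u (i₀ - 1) := isMinOn_iff.mp hmin _ (by simp only [coe_Icc, Set.mem_Icc]; omega)
    rw [hF _ hi, Nat.sub_add_cancel hi₀'.1]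
    exact mul_nonpos_of_nonneg_of_nonpos (hk _ hi) (sub_nonpos.mpr hle)

lemma flux_sub_flux_pred_nonneg_of_isMinOn (hF0 : F 0 = 0) (hFN : F N = 0)
    (hF : ∀ i ∈ Icc 1 (N - 1), F i = k i * (u (i + 1) - u i))
    (hk : ∀ i ∈ Icc 1 (N - 1), 0 ≤ k i) (hmin : IsMinOn u (Icc 1 N) i₀) (hi₀ : i₀ ∈ Icc 1 N) :
    0 ≤ F i₀ - F (i₀ - 1) :=
  sub_nonneg.mpr <|
    (flux_pred_nonpos_of_isMinOn hF0 hF hk hmin hi₀).trans (flux_nonneg_of_isMinOn hFN hF hk hmin hi₀)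

end Flux

lemma nonneg_of_nonneg_at_isMinOn_div {ι : Type*} {s : Finset ι} {ρ M : ι → ℝ}
    (hM : ∀ p ∈ s, 0 < M p) (hmin : ∀ p ∈ s, IsMinOn (fun q => ρ q / M q) s p → 0 ≤ ρ p) :
    ∀ p ∈ s, 0 ≤ ρ p := by
  intro p hp
  obtain ⟨p₀, hp₀, hp₀min⟩ := s.exists_min_image (fun q => ρ q / M q) ⟨p, hp⟩
  have hu₀ : 0 ≤ ρ p₀ / M p₀ := div_nonneg (hmin p₀ hp₀ (isMinOn_iff.mpr hp₀min)) (hM p₀ hp₀).le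
  have hu : 0 ≤ ρ p / M p := hu₀.trans (hp₀min p hp)
  simpa using (le_div_iff₀ (hM p hp)).mp hu

theorem fully_discrete_positivity_2d_general
    (Nx Ny : ℕ)
    (hx : ℕ → ℝ) (hxpos : ∀ i ∈ Finset.Icc 1 Nx, 0 < hx i)
    (hy : ℕ → ℝ) (hypos : ∀ j ∈ Finset.Icc 1 Ny, 0 < hy j)
    (xhalf xc hxhalf : ℕ → ℝ) (yhalf yc hyhalf : ℕ → ℝ)
    (hhxhalf : ∀ i ∈ Finset.Icc 1 (Nx - 1), hxhalf i = (hx i + hx (i + 1)) / 2)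
    (hhyhalf : ∀ j ∈ Finset.Icc 1 (Ny - 1), hyhalf j = (hy j + hy (j + 1)) / 2)
    (V W : ℝ → ℝ → ℝ)
    (Q : ℝ → ℝ → (ℕ → ℕ → ℝ) → ℝ)
    (hQ : ∀ (x y : ℝ) (v : ℕ → ℕ → ℝ), Q x y v =
      Real.exp (-V x y - ∑ k ∈ Finset.Icc 1 Nx, ∑ l ∈ Finset.Icc 1 Ny,
        hx k * hy l * W (xc k - x) (yc l - y) * v k l))
    (ρn ρ1 : ℕ → ℕ → ℝ) (τ : ℝ) (hτ : 0 < τ)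
    (Mn Mnxh Mnyh : ℕ → ℕ → ℝ)
    (hMn : ∀ i ∈ Finset.Icc 1 Nx, ∀ j ∈ Finset.Icc 1 Ny, Mn i j = Q (xc i) (yc j) ρn)
    (hMnxh : ∀ i ∈ Finset.Icc 1 (Nx - 1), ∀ j ∈ Finset.Icc 1 Ny,
      Mnxh i j = Q (xhalf i) (yc j) ρn)
    (hMnyh : ∀ i ∈ Finset.Icc 1 Nx, ∀ j ∈ Finset.Icc 1 (Ny - 1),
      Mnyh i j = Q (xc i) (yhalf j) ρn)
    (Cx Cy : ℕ → ℕ → ℝ)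
    (hCx : ∀ i ∈ Finset.Icc 1 (Nx - 1), ∀ j ∈ Finset.Icc 1 Ny,
      Cx i j = Mnxh i j / hxhalf i * (ρ1 (i + 1) j / Mn (i + 1) j - ρ1 i j / Mn i j))
    (hCy : ∀ i ∈ Finset.Icc 1 Nx, ∀ j ∈ Finset.Icc 1 (Ny - 1),
      Cy i j = Mnyh i j / hyhalf j * (ρ1 i (j + 1) / Mn i (j + 1) - ρ1 i j / Mn i j))
    (hCx0 : ∀ j : ℕ, Cx 0 j = 0) (hCxN : ∀ j : ℕ, Cx Nx j = 0)
    (hCy0 : ∀ i : ℕ, Cy i 0 = 0) (hCyN : ∀ i : ℕ, Cy i Ny = 0)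
    (hscheme : ∀ i ∈ Finset.Icc 1 Nx, ∀ j ∈ Finset.Icc 1 Ny,
      (ρ1 i j - ρn i j) / τ = (Cx i j - Cx (i - 1) j) / hx i + (Cy i j - Cy i (j - 1)) / hy j)
    (hρn : ∀ i ∈ Finset.Icc 1 Nx, ∀ j ∈ Finset.Icc 1 Ny, 0 ≤ ρn i j) :
    ∀ i ∈ Finset.Icc 1 Nx, ∀ j ∈ Finset.Icc 1 Ny, 0 ≤ ρ1 i j := by
  have hQpos (x y : ℝ) (v : ℕ → ℕ → ℝ) : 0 < Q x y v := hQ x y v ▸ Real.exp_pos _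
  have hkx : ∀ j ∈ Icc 1 Ny, ∀ i ∈ Icc 1 (Nx - 1), 0 ≤ Mnxh i j / hxhalf i := fun j hj i hi =>
    div_nonneg (hMnxh i hi j hj ▸ hQpos _ _ _).le (midpoint_step_pos hxpos hhxhalf i hi).le
  have hky : ∀ i ∈ Icc 1 Nx, ∀ j ∈ Icc 1 (Ny - 1), 0 ≤ Mnyh i j / hyhalf j := fun i hi j hj =>
    div_nonneg (hMnyh i hi j hj ▸ hQpos _ _ _).le (midpoint_step_pos hypos hhyhalf j hj).le
  intro i hi j hj
  refine nonneg_of_nonneg_at_isMinOn_div (s := Icc 1 Nx ×ˢ Icc 1 Ny) (ρ := fun p => ρ1 p.1 p.2)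
    (M := fun p => Mn p.1 p.2) (fun p hp => ?_) (fun p hp hmin => ?_) (i, j) (mk_mem_product hi hj)
  · obtain ⟨hp₁, hp₂⟩ := mem_product.mp hp
    exact hMn _ hp₁ _ hp₂ ▸ hQpos _ _ _
  obtain ⟨i₀, j₀⟩ := p
  obtain ⟨hi₀, hj₀⟩ := mem_product.mp hp
  have hminx : IsMinOn (fun i => ρ1 i j₀ / Mn i j₀) (Icc 1 Nx) i₀ :=
    hmin.comp_mapsTo (g := fun i => (i, j₀)) (fun _ hi => mk_mem_product hi hj₀) rfl
  have hminy : IsMinOn (fun j => ρ1 i₀ j / Mn i₀ j) (Icc 1 Ny) j₀ :=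
    hmin.comp_mapsTo (g := fun j => (i₀, j)) (fun _ hj => mk_mem_product hi₀ hj) rfl
  have hdivx : 0 ≤ (Cx i₀ j₀ - Cx (i₀ - 1) j₀) / hx i₀ :=
    div_nonneg (flux_sub_flux_pred_nonneg_of_isMinOn (F := fun i => Cx i j₀) (hCx0 j₀) (hCxN j₀)
      (fun i hi => hCx i hi j₀ hj₀) (hkx j₀ hj₀) hminx hi₀) (hxpos i₀ hi₀).le
  have hdivy : 0 ≤ (Cy i₀ j₀ - Cy i₀ (j₀ - 1)) / hy j₀ :=
    div_nonneg (flux_sub_flux_pred_nonneg_of_isMinOn (F := fun j => Cy i₀ j) (hCy0 i₀) (hCyN i₀)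
      (fun j hj => hCy i₀ hi₀ j hj) (hky i₀ hi₀) hminy hj₀) (hypos j₀ hj₀).le
  have hgrowth : 0 ≤ (ρ1 i₀ j₀ - ρn i₀ j₀) / τ := hscheme i₀ hi₀ j₀ hj₀ ▸ add_nonneg hdivx hdivy
  have hρ : ρn i₀ j₀ ≤ ρ1 i₀ j₀ := by simpa [sub_nonneg] using (le_div_iff₀ hτ).mp hgrowth
  exact (hρn i₀ hi₀ j₀ hj₀).trans hρ

theorem fully_discrete_positivity_2d
    (Nx Ny : ℕ) (hNx : 2 ≤ Nx) (hNy : 2 ≤ Ny)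
    (hx : ℕ → ℝ) (hxpos : ∀ i ∈ Finset.Icc 1 Nx, 0 < hx i)
    (hy : ℕ → ℝ) (hypos : ∀ j ∈ Finset.Icc 1 Ny, 0 < hy j)
    (a c : ℝ)
    (xhalf xc hxhalf : ℕ → ℝ) (yhalf yc hyhalf : ℕ → ℝ)
    (hxhalf0 : xhalf 0 = a)
    (hxhalfdef : ∀ i ∈ Finset.Icc 1 Nx, xhalf i = xhalf (i - 1) + hx i)
    (hxcdef : ∀ i ∈ Finset.Icc 1 Nx, xc i = xhalf (i - 1) + hx i / 2)
    (hhxhalf : ∀ i ∈ Finset.Icc 1 (Nx - 1), hxhalf i = (hx i + hx (i + 1)) / 2)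
    (hyhalf0 : yhalf 0 = c)
    (hyhalfdef : ∀ j ∈ Finset.Icc 1 Ny, yhalf j = yhalf (j - 1) + hy j)
    (hycdef : ∀ j ∈ Finset.Icc 1 Ny, yc j = yhalf (j - 1) + hy j / 2)
    (hhyhalf : ∀ j ∈ Finset.Icc 1 (Ny - 1), hyhalf j = (hy j + hy (j + 1)) / 2)
    (V W : ℝ → ℝ → ℝ)
    (Q : ℝ → ℝ → (ℕ → ℕ → ℝ) → ℝ)
    (hQ : ∀ (x y : ℝ) (v : ℕ → ℕ → ℝ), Q x y v =
      Real.exp (-V x y - ∑ k ∈ Finset.Icc 1 Nx, ∑ l ∈ Finset.Icc 1 Ny,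
        hx k * hy l * W (xc k - x) (yc l - y) * v k l))
    (ρn ρ1 : ℕ → ℕ → ℝ) (τ : ℝ) (hτ : 0 < τ)
    (Mn Mnxh Mnyh : ℕ → ℕ → ℝ)
    (hMn : ∀ i ∈ Finset.Icc 1 Nx, ∀ j ∈ Finset.Icc 1 Ny, Mn i j = Q (xc i) (yc j) ρn)
    (hMnxh : ∀ i ∈ Finset.Icc 1 (Nx - 1), ∀ j ∈ Finset.Icc 1 Ny,
      Mnxh i j = Q (xhalf i) (yc j) ρn)
    (hMnyh : ∀ i ∈ Finset.Icc 1 Nx, ∀ j ∈ Finset.Icc 1 (Ny - 1),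
      Mnyh i j = Q (xc i) (yhalf j) ρn)
    (Cx Cy : ℕ → ℕ → ℝ)
    (hCx : ∀ i ∈ Finset.Icc 1 (Nx - 1), ∀ j ∈ Finset.Icc 1 Ny,
      Cx i j = Mnxh i j / hxhalf i * (ρ1 (i + 1) j / Mn (i + 1) j - ρ1 i j / Mn i j))
    (hCy : ∀ i ∈ Finset.Icc 1 Nx, ∀ j ∈ Finset.Icc 1 (Ny - 1),
      Cy i j = Mnyh i j / hyhalf j * (ρ1 i (j + 1) / Mn i (j + 1) - ρ1 i j / Mn i j))
    (hCx0 : ∀ j : ℕ, Cx 0 j = 0) (hCxN : ∀ j : ℕ, Cx Nx j = 0)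
    (hCy0 : ∀ i : ℕ, Cy i 0 = 0) (hCyN : ∀ i : ℕ, Cy i Ny = 0)
    (hscheme : ∀ i ∈ Finset.Icc 1 Nx, ∀ j ∈ Finset.Icc 1 Ny,
      (ρ1 i j - ρn i j) / τ = (Cx i j - Cx (i - 1) j) / hx i + (Cy i j - Cy i (j - 1)) / hy j)
    (hρn : ∀ i ∈ Finset.Icc 1 Nx, ∀ j ∈ Finset.Icc 1 Ny, 0 ≤ ρn i j) :
    ∀ i ∈ Finset.Icc 1 Nx, ∀ j ∈ Finset.Icc 1 Ny, 0 ≤ ρ1 i j :=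
  fully_discrete_positivity_2d_general Nx Ny hx hxpos hy hypos xhalf xc hxhalf yhalf yc hyhalf
    hhxhalf hhyhalf V W Q hQ ρn ρ1 τ hτ Mn Mnxh Mnyh hMn hMnxh hMnyh Cx Cy hCx hCy hCx0 hCxN hCy0
    hCyN hscheme hρn
end

section
/- Positivity preservation for the second order (predictor–corrector) 1D scheme under an explicit time step restriction: let g*_{j+1/2} = M*_{j+1/2}/h_{j+1/2}. Suppose ρ* ∈ ℝ^N satisfies the predictor step, ρ^{n+1}_j = 2ρ*_j − ρ^n_j for all j, ρ^n_j ≥ 0 for all j, and τ ≤ min{ 2h_1 M*_1 / g*_{3/2}, min_{1<j<N} 2h_j M*_j / (g*_{j+1/2} + g*_{j−1/2}), 2h_N M*_N / g*_{N−1/2} }. Then ρ^{n+1}_j ≥ 0 for all 1 ≤ j ≤ N. -/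
/-!
Write `ρ*_j = u_j M*_j` and `g_{j+1/2} = 0` at the two boundary faces, so that every flux is
`C*_{j+1/2} = g_{j+1/2} (u_{j+1} - u_j)`. The predictor is a backward Euler step, hence obeys a
discrete minimum principle: at a minimiser of `u` the flux difference is nonnegative, which
forces `u ≥ 0`. The corrector is `ρ^{n+1}_j = ρ*_j + (τ/2)(C*_{j+1/2} - C*_{j-1/2})/h_j`, and with
`u ≥ 0` the flux difference is at least `-(g_{j+1/2} + g_{j-1/2}) u_j`; the time step
restriction is exactly what keeps `u_j (M*_j - τ (g_{j+1/2} + g_{j-1/2}) / (2 h_j))` nonnegative.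
-/

open Finset

/-- Index `j` stands for the face `j + 1/2`: `flux g u j` is `g_{j+1/2} (u_{j+1} - u_j)`. -/
def flux (g u : ℕ → ℝ) (j : ℕ) : ℝ := g j * (u (j + 1) - u j)

section Flux

variable {g u : ℕ → ℝ}

lemma flux_sub_flux_pred_nonneg_of_forall_le (hg : ∀ i, 0 ≤ g i) {j : ℕ}
    (hmin : ∀ i, u j ≤ u i) : 0 ≤ flux g u j - flux g u (j - 1) := by
  cases j with
  | zero => simp
  | succ k =>
    have hright : 0 ≤ flux g u (k + 1) := mul_nonneg (hg _) (sub_nonneg.2 (hmin _))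
    have hleft : flux g u k ≤ 0 := mul_nonpos_of_nonneg_of_nonpos (hg k) (sub_nonpos.2 (hmin k))
    simp only [Nat.add_sub_cancel]
    linarith

lemma neg_mul_le_flux_sub_flux_pred (hg : ∀ i, 0 ≤ g i) (hu : ∀ i, 0 ≤ u i) (j : ℕ) :
    -((g j + g (j - 1)) * u j) ≤ flux g u j - flux g u (j - 1) := by
  cases j with
  | zero => simp only [flux, zero_tsub]; nlinarith [hg 0, hu 0]
  | succ k =>
    simp only [flux, Nat.add_sub_cancel]
    nlinarith [mul_nonneg (hg (k + 1)) (hu (k + 2)), mul_nonneg (hg k) (hu k)]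

theorem nonneg_of_implicit_step_s14 {s : Finset ℕ} {M h ρ : ℕ → ℝ} {τ : ℝ} (hτ : 0 ≤ τ)
    (hg : ∀ i, 0 ≤ g i) (hh : ∀ j ∈ s, 0 < h j) (hM : ∀ j ∈ s, 0 < M j)
    (hρ : ∀ j ∈ s, 0 ≤ ρ j) (hu : ∀ j ∉ s, u j = 0)
    (hstep : ∀ j ∈ s, u j * M j = ρ j + τ * ((flux g u j - flux g u (j - 1)) / h j)) :
    ∀ j, 0 ≤ u j := by
  by_contra! ⟨j, hj⟩
  have hjs : j ∈ s := by_contra fun hjs => by linarith [hu j hjs]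
  obtain ⟨j₀, hj₀, hmin⟩ := s.exists_min_image u ⟨j, hjs⟩
  have hneg : u j₀ < 0 := (hmin j hjs).trans_lt hj
  have hglobal : ∀ i, u j₀ ≤ u i := fun i => by
    by_cases hi : i ∈ s
    · exact hmin i hi
    · rw [hu i hi]; exact hneg.le
  have hdiv : 0 ≤ τ * ((flux g u j₀ - flux g u (j₀ - 1)) / h j₀) :=
    mul_nonneg hτ (div_nonneg (flux_sub_flux_pred_nonneg_of_forall_le hg hglobal) (hh j₀ hj₀).le)
  have := hstep j₀ hj₀
  nlinarith [mul_neg_of_neg_of_pos hneg (hM j₀ hj₀), hρ j₀ hj₀]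

lemma add_mul_div_nonneg_of_cfl {τ G h M u D : ℝ} (hτ : 0 ≤ τ) (hh : 0 < h) (hu : 0 ≤ u)
    (hD : -(G * u) ≤ D) (hcfl : τ * G ≤ h * M) : 0 ≤ u * M + τ * (D / h) := by
  have key : 0 ≤ h * (u * M) + τ * D := by
    nlinarith [mul_nonneg hu (sub_nonneg.2 hcfl), mul_le_mul_of_nonneg_left hD hτ]
  have hrw : u * M + τ * (D / h) = (h * (u * M) + τ * D) / h := by field_simp
  rw [hrw]
  exact div_nonneg key hh.le

theorem explicit_step_nonneg {M h : ℕ → ℝ} {τ : ℝ} (hτ : 0 ≤ τ) (hg : ∀ i, 0 ≤ g i)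
    (hu : ∀ i, 0 ≤ u i) {j : ℕ} (hh : 0 < h j) (hcfl : τ * (g j + g (j - 1)) ≤ h j * M j) :
    0 ≤ u j * M j + τ * ((flux g u j - flux g u (j - 1)) / h j) :=
  add_mul_div_nonneg_of_cfl hτ hh (hu j) (neg_mul_le_flux_sub_flux_pred hg hu j) hcfl

end Flux

/-- The three time step restrictions (first cell, interior cells, last cell) are one condition
on the face coefficients extended by zero to the boundary faces. -/
lemma cfl_of_boundary_and_interior {N : ℕ} {gs c : ℕ → ℝ} {τ : ℝ}
    (hgs : ∀ j ∈ Icc 1 (N - 1), 0 ≤ gs j) (hc : ∀ j ∈ Icc 1 N, 0 ≤ c j)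
    (hfirst : τ ≤ c 1 / gs 1) (hmid : ∀ j : ℕ, 1 < j → j < N → τ ≤ c j / (gs j + gs (j - 1)))
    (hlast : τ ≤ c N / gs (N - 1)) (j : ℕ) (hj : j ∈ Icc 1 N) :
    τ * ((Set.Icc 1 (N - 1)).indicator gs j + (Set.Icc 1 (N - 1)).indicator gs (j - 1))
      ≤ c j := by
  have hcj := hc j hj
  simp only [Finset.mem_Icc] at hj
  by_cases hfirst' : j = 1
  · subst hfirst'
    have h0 : (Set.Icc 1 (N - 1)).indicator gs 0 = 0 := Set.indicator_of_notMem (by simp) _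
    rw [Nat.sub_self, h0, add_zero]
    by_cases hN : 1 ∈ Set.Icc 1 (N - 1)
    · rw [Set.indicator_of_mem hN]
      exact mul_le_of_le_div₀ hcj (hgs 1 (by simpa using hN)) hfirst
    · rw [Set.indicator_of_notMem hN, mul_zero]
      exact hcj
  by_cases hlast' : j = N
  · subst hlast'
    have hN : (Set.Icc 1 (j - 1)).indicator gs j = 0 := Set.indicator_of_notMem (by simp; omega) _
    rw [hN, zero_add, Set.indicator_of_mem (by simp; omega)]
    exact mul_le_of_le_div₀ hcj (hgs _ (by simp; omega)) hlast
  rw [Set.indicator_of_mem (by simp; omega), Set.indicator_of_mem (by simp; omega)]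
  exact mul_le_of_le_div₀ hcj (add_nonneg (hgs _ (by simp; omega)) (hgs _ (by simp; omega)))
    (hmid j (by omega) (by omega))

lemma eq_flux_indicator {N : ℕ} {C gs ρ M : ℕ → ℝ}
    (hC : ∀ j ∈ Icc 1 (N - 1), C j = gs j * (ρ (j + 1) / M (j + 1) - ρ j / M j))
    (hC0 : C 0 = 0) (hCN : C N = 0) {j : ℕ} (hj : j ≤ N) :
    C j = flux ((Set.Icc 1 (N - 1)).indicator gs)
      ((Set.Icc 1 N).indicator fun i => ρ i / M i) j := by
  by_cases hint : j ∈ Icc 1 (N - 1)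
  · have hj' := Finset.mem_Icc.1 hint
    rw [hC j hint, flux, Set.indicator_of_mem (by simpa using hint),
      Set.indicator_of_mem (by simp; omega), Set.indicator_of_mem (by simp; omega)]
  · have hbdry : j = 0 ∨ j = N := by simp only [Finset.mem_Icc] at hint; omega
    rw [flux, Set.indicator_of_notMem (by simpa using hint), zero_mul]
    rcases hbdry with rfl | rfl <;> assumption

theorem predictor_corrector_positivity_1d_general
    (N : ℕ)
    (h : ℕ → ℝ) (hpos : ∀ j ∈ Finset.Icc 1 N, 0 < h j)
    (xhalf xc hhalf : ℕ → ℝ)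
    (hhhalf : ∀ j ∈ Finset.Icc 1 (N - 1), hhalf j = (h j + h (j + 1)) / 2)
    (V W : ℝ → ℝ)
    (Q : ℝ → (ℕ → ℝ) → ℝ)
    (hQ : ∀ (x : ℝ) (v : ℕ → ℝ), Q x v =
      Real.exp (-V x - ∑ i ∈ Finset.Icc 1 N, h i * W (xc i - x) * v i))
    (ρn ρnm1 ρstar ρ1 : ℕ → ℝ) (τ : ℝ) (hτ : 0 < τ)
    (Ms Mshalf : ℕ → ℝ)
    (hMs : ∀ j ∈ Finset.Icc 1 N, Ms j = Q (xc j) (fun i => 3 / 2 * ρn i - 1 / 2 * ρnm1 i))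
    (hMshalf : ∀ j ∈ Finset.Icc 1 (N - 1),
      Mshalf j = Q (xhalf j) (fun i => 3 / 2 * ρn i - 1 / 2 * ρnm1 i))
    (Cs : ℕ → ℝ)
    (hCs : ∀ j ∈ Finset.Icc 1 (N - 1),
      Cs j = Mshalf j / hhalf j * (ρstar (j + 1) / Ms (j + 1) - ρstar j / Ms j))
    (hCs0 : Cs 0 = 0) (hCsN : Cs N = 0)
    (hpred : ∀ j ∈ Finset.Icc 1 N, (ρstar j - ρn j) / (τ / 2) = (Cs j - Cs (j - 1)) / h j)
    (hcorr : ∀ j ∈ Finset.Icc 1 N, ρ1 j = 2 * ρstar j - ρn j)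
    (gs : ℕ → ℝ) (hgs : ∀ j ∈ Finset.Icc 1 (N - 1), gs j = Mshalf j / hhalf j)
    (hρn : ∀ j ∈ Finset.Icc 1 N, 0 ≤ ρn j)
    (hτ1 : τ ≤ 2 * h 1 * Ms 1 / gs 1)
    (hτmid : ∀ j : ℕ, 1 < j → j < N → τ ≤ 2 * h j * Ms j / (gs j + gs (j - 1)))
    (hτN : τ ≤ 2 * h N * Ms N / gs (N - 1)) :
    ∀ j ∈ Finset.Icc 1 N, 0 ≤ ρ1 j := by
  set u := (Set.Icc 1 N).indicator fun j => ρstar j / Ms j with hu_def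
  set g := (Set.Icc 1 (N - 1)).indicator gs with hg_def
  have hMs_pos : ∀ j ∈ Icc 1 N, 0 < Ms j := fun j hj => by
    rw [hMs j hj, hQ]; exact Real.exp_pos _
  have hgs_pos : ∀ j ∈ Icc 1 (N - 1), 0 < gs j := fun j hj => by
    have hj' := Finset.mem_Icc.1 hj
    have hh : 0 < hhalf j := by
      rw [hhhalf j hj]; linarith [hpos j (by simp; omega), hpos (j + 1) (by simp; omega)]
    rw [hgs j hj, hMshalf j hj, hQ]
    exact div_pos (Real.exp_pos _) hh
  have hg : ∀ i, 0 ≤ g i := Set.indicator_nonneg fun i hi => (hgs_pos i (by simpa using hi)).le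
  have hρstar : ∀ j ∈ Icc 1 N, ρstar j = u j * Ms j := fun j hj => by
    rw [hu_def, Set.indicator_of_mem (by simpa using hj), div_mul_cancel₀ _ (hMs_pos j hj).ne']
  have hCs_flux : ∀ j ≤ N, Cs j = flux g u j := fun j hj =>
    eq_flux_indicator (fun i hi => by rw [hCs i hi, hgs i hi]) hCs0 hCsN hj
  have hstep : ∀ j ∈ Icc 1 N,
      ρstar j - ρn j = τ / 2 * ((flux g u j - flux g u (j - 1)) / h j) := fun j hj => by
    have hj' := Finset.mem_Icc.1 hj
    rw [← hCs_flux j hj'.2, ← hCs_flux (j - 1) (by omega), ← hpred j hj,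
      mul_div_cancel₀ _ (by positivity)]
  have hu : ∀ j, 0 ≤ u j :=
    nonneg_of_implicit_step_s14 (τ := τ / 2) (by positivity) hg hpos hMs_pos hρn
    (fun j hj => Set.indicator_of_notMem (by simpa using hj) _)
    (fun j hj => by rw [← hρstar j hj]; linarith [hstep j hj])
  have hcfl := cfl_of_boundary_and_interior (fun j hj => (hgs_pos j hj).le)
    (fun j hj => by have := hpos j hj; have := hMs_pos j hj; positivity) hτ1 hτmid hτN
  intro j hj
  rw [hcorr j hj, show 2 * ρstar j - ρn j = ρstar j + (ρstar j - ρn j) by ring, hstep j hj,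
    hρstar j hj]
  exact explicit_step_nonneg (by positivity) hg hu (hpos j hj) (by linarith [hcfl j hj])

theorem predictor_corrector_positivity_1d
    (N : ℕ) (hN : 2 ≤ N)
    (h : ℕ → ℝ) (hpos : ∀ j ∈ Finset.Icc 1 N, 0 < h j)
    (a : ℝ)
    (xhalf xc hhalf : ℕ → ℝ)
    (hxhalf0 : xhalf 0 = a)
    (hxhalf : ∀ j ∈ Finset.Icc 1 N, xhalf j = xhalf (j - 1) + h j)
    (hxc : ∀ j ∈ Finset.Icc 1 N, xc j = xhalf (j - 1) + h j / 2)
    (hhhalf : ∀ j ∈ Finset.Icc 1 (N - 1), hhalf j = (h j + h (j + 1)) / 2)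
    (V W : ℝ → ℝ)
    (Q : ℝ → (ℕ → ℝ) → ℝ)
    (hQ : ∀ (x : ℝ) (v : ℕ → ℝ), Q x v =
      Real.exp (-V x - ∑ i ∈ Finset.Icc 1 N, h i * W (xc i - x) * v i))
    (ρn ρnm1 ρstar ρ1 : ℕ → ℝ) (τ : ℝ) (hτ : 0 < τ)
    (Ms Mshalf : ℕ → ℝ)
    (hMs : ∀ j ∈ Finset.Icc 1 N, Ms j = Q (xc j) (fun i => 3 / 2 * ρn i - 1 / 2 * ρnm1 i))
    (hMshalf : ∀ j ∈ Finset.Icc 1 (N - 1),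
      Mshalf j = Q (xhalf j) (fun i => 3 / 2 * ρn i - 1 / 2 * ρnm1 i))
    (Cs : ℕ → ℝ)
    (hCs : ∀ j ∈ Finset.Icc 1 (N - 1),
      Cs j = Mshalf j / hhalf j * (ρstar (j + 1) / Ms (j + 1) - ρstar j / Ms j))
    (hCs0 : Cs 0 = 0) (hCsN : Cs N = 0)
    (hpred : ∀ j ∈ Finset.Icc 1 N, (ρstar j - ρn j) / (τ / 2) = (Cs j - Cs (j - 1)) / h j)
    (hcorr : ∀ j ∈ Finset.Icc 1 N, ρ1 j = 2 * ρstar j - ρn j)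
    (gs : ℕ → ℝ) (hgs : ∀ j ∈ Finset.Icc 1 (N - 1), gs j = Mshalf j / hhalf j)
    (hρn : ∀ j ∈ Finset.Icc 1 N, 0 ≤ ρn j)
    (hτ1 : τ ≤ 2 * h 1 * Ms 1 / gs 1)
    (hτmid : ∀ j : ℕ, 1 < j → j < N → τ ≤ 2 * h j * Ms j / (gs j + gs (j - 1)))
    (hτN : τ ≤ 2 * h N * Ms N / gs (N - 1)) :
    ∀ j ∈ Finset.Icc 1 N, 0 ≤ ρ1 j :=
  predictor_corrector_positivity_1d_general N h hpos xhalf xc hhalf hhhalf V W Q hQ ρn ρnm1 ρstar ρ1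
    τ hτ Ms Mshalf hMs hMshalf Cs hCs hCs0 hCsN hpred hcorr gs hgs hρn hτ1 hτmid hτN
end

section
/- Properties (1) and (2) of the local scaling limiter: under the limiter assumptions, the limited values satisfy c̃_j ≥ 0 for all 1 ≤ j ≤ m, and Σ_{j=1}^m c̃_j = Σ_{j=1}^m c_j. -/
/-!
Write `c̃_j = c̄ - θ (c̄ - c_j)`. Since `c_j ≥ c_min` and `θ ≥ 0`, this is at least
`c̄ - θ (c̄ - c_min)`, which is nonnegative precisely because `θ ≤ c̄ / (c̄ - c_min)`.
Conservation holds for every `θ`: moving each value towards the mean by the same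
fraction does not change the total, as `m c̄ = ∑ c_j`.
-/

open Finset
open scoped BigOperators

theorem sum_mul_add_one_sub_mul_expect {ι : Type*} (s : Finset ι) (c : ι → ℝ) (θ : ℝ) :
    ∑ j ∈ s, (θ * c j + (1 - θ) * 𝔼 i ∈ s, c i) = ∑ j ∈ s, c j := by
  rw [sum_add_distrib, ← mul_sum, sum_const, nsmul_eq_mul, mul_left_comm, card_mul_expect]
  ring

theorem mul_add_one_sub_mul_nonneg {θ a b x : ℝ} (hθ : 0 ≤ θ) (hθab : θ * (b - a) ≤ b)
    (hax : a ≤ x) : 0 ≤ θ * x + (1 - θ) * b := by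
  have : θ * (b - x) ≤ θ * (b - a) := mul_le_mul_of_nonneg_left (by linarith) hθ
  linarith

theorem min_one_div_mul_le {b d : ℝ} (hd : 0 < d) : min 1 (b / d) * d ≤ b :=
  calc min 1 (b / d) * d ≤ b / d * d := by gcongr; exact min_le_right _ _
    _ = b := div_mul_cancel₀ b hd.ne'

theorem limiter_nonneg_and_conservative_general
    (m : ℕ)
    (c : ℕ → ℝ)
    (cbar : ℝ) (hcbar : cbar = (∑ j ∈ Finset.Icc 1 m, c j) / m)
    (hcbarpos : 0 < cbar)
    (cmin : ℝ)
    (hcminle : ∀ j ∈ Finset.Icc 1 m, cmin ≤ c j)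
    (hcminlt : cmin < cbar)
    (θ : ℝ) (hθ : θ = min 1 (cbar / (cbar - cmin)))
    (ctilde : ℕ → ℝ)
    (hctilde : ∀ j ∈ Finset.Icc 1 m, ctilde j = θ * c j + (1 - θ) * cbar)
 :
    (∀ j ∈ Finset.Icc 1 m, 0 ≤ ctilde j) ∧
      ∑ j ∈ Finset.Icc 1 m, ctilde j = ∑ j ∈ Finset.Icc 1 m, c j := by
  have hθ0 : 0 ≤ θ := hθ ▸ le_min zero_le_one (div_pos hcbarpos (sub_pos.2 hcminlt)).le
  have hθmul : θ * (cbar - cmin) ≤ cbar := hθ ▸ min_one_div_mul_le (sub_pos.2 hcminlt)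
  have hcbar_expect : cbar = 𝔼 j ∈ Icc 1 m, c j := by
    rw [hcbar, expect_eq_sum_div_card, Nat.card_Icc, Nat.add_sub_cancel]
  refine ⟨fun j hj => ?_, ?_⟩
  · rw [hctilde j hj]
    exact mul_add_one_sub_mul_nonneg hθ0 hθmul (hcminle j hj)
  · rw [sum_congr rfl hctilde, hcbar_expect, sum_mul_add_one_sub_mul_expect]

theorem limiter_nonneg_and_conservative
    (m : ℕ) (hm : 1 ≤ m)
    (c : ℕ → ℝ)
    (cbar : ℝ) (hcbar : cbar = (∑ j ∈ Finset.Icc 1 m, c j) / m)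
    (hcbarpos : 0 < cbar)
    (cmin : ℝ)
    (hcminle : ∀ j ∈ Finset.Icc 1 m, cmin ≤ c j)
    (hcminmem : ∃ j ∈ Finset.Icc 1 m, c j = cmin)
    (hcminlt : cmin < cbar)
    (θ : ℝ) (hθ : θ = min 1 (cbar / (cbar - cmin)))
    (ctilde : ℕ → ℝ)
    (hctilde : ∀ j ∈ Finset.Icc 1 m, ctilde j = θ * c j + (1 - θ) * cbar)
 :
    (∀ j ∈ Finset.Icc 1 m, 0 ≤ ctilde j) ∧
      ∑ j ∈ Finset.Icc 1 m, ctilde j = ∑ j ∈ Finset.Icc 1 m, c j :=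
  limiter_nonneg_and_conservative_general m c cbar hcbar hcbarpos cmin hcminle hcminlt θ hθ ctilde
    hctilde
end

section
/- Property (3) of the local scaling limiter: under the limiter assumptions, if in addition c_min < 0, then for every 1 ≤ j ≤ m one has |c̃_j − c_j| ≤ m · (−c_min). -/
/-!
Since `c̃_j - c_j = (1 - θ) (c̄ - c_j)`, it suffices to bound both factors. For `c_min < 0` the
limiter is active, `1 - θ = -c_min / (c̄ - c_min)`, while every `c_j` stays within
`m (c̄ - c_min)` of the mean because the remaining `m - 1` values are at least `c_min`.
-/

open Finset

theorem Finset.abs_sum_div_card_sub_le {ι : Type*} {s : Finset ι} {f : ι → ℝ} {a : ℝ}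
    (ha : ∀ i ∈ s, a ≤ f i) {j : ι} (hj : j ∈ s) :
    |(∑ i ∈ s, f i) / #s - f j| ≤ #s * ((∑ i ∈ s, f i) / #s - a) := by
  classical
  set μ := (∑ i ∈ s, f i) / #s
  have hcard : (1 : ℝ) ≤ #s := by exact_mod_cast card_pos.mpr ⟨j, hj⟩
  have hsum : ∑ i ∈ s, f i = #s * μ := by simp only [μ]; field_simp
  have hrest : (#s - 1 : ℝ) * a ≤ ∑ i ∈ s.erase j, f i := by
    have h := card_nsmul_le_sum (s.erase j) f a fun i hi => ha i (mem_of_mem_erase hi)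
    rwa [card_erase_of_mem hj, nsmul_eq_mul, Nat.cast_pred (card_pos.mpr ⟨j, hj⟩)] at h
  have hsplit : f j + ∑ i ∈ s.erase j, f i = #s * μ := hsum ▸ add_sum_erase s f hj
  have hupper : f j - μ ≤ (#s - 1) * (μ - a) := by linarith
  have hlower : μ - f j ≤ μ - a := by linarith [ha j hj]
  have hμa : 0 ≤ μ - a := by nlinarith
  rw [abs_le]
  constructor <;> nlinarith

theorem one_sub_min_one_div_sub_eq {a b : ℝ} (hba : b < a) (hb : b ≤ 0) :
    1 - min 1 (a / (a - b)) = -b / (a - b) := by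
  have hd : 0 < a - b := by linarith
  rw [min_eq_right ((div_le_one hd).mpr (by linarith))]
  field_simp
  ring

theorem limiter_deviation_bound_general
    (m : ℕ)
    (c : ℕ → ℝ)
    (cbar : ℝ) (hcbar : cbar = (∑ j ∈ Finset.Icc 1 m, c j) / m)
    (cmin : ℝ)
    (hcminle : ∀ j ∈ Finset.Icc 1 m, cmin ≤ c j)
    (hcminlt : cmin < cbar)
    (θ : ℝ) (hθ : θ = min 1 (cbar / (cbar - cmin)))
    (ctilde : ℕ → ℝ)
    (hctilde : ∀ j ∈ Finset.Icc 1 m, ctilde j = θ * c j + (1 - θ) * cbar)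
    (hcminneg : cmin < 0) :
    ∀ j ∈ Finset.Icc 1 m, |ctilde j - c j| ≤ m * (-cmin) := by
  intro j hj
  have hd : 0 < cbar - cmin := by linarith
  have hscale : 1 - θ = -cmin / (cbar - cmin) := hθ ▸ one_sub_min_one_div_sub_eq hcminlt hcminneg.le
  have hspread : |cbar - c j| ≤ m * (cbar - cmin) := by
    simpa only [← hcbar, Nat.card_Icc, add_tsub_cancel_right]
      using Finset.abs_sum_div_card_sub_le hcminle hj
  have hscale_nonneg : 0 ≤ -cmin / (cbar - cmin) := div_nonneg (by linarith) hd.le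
  calc |ctilde j - c j| = |(1 - θ) * (cbar - c j)| := by rw [hctilde j hj]; ring_nf
    _ = (-cmin) / (cbar - cmin) * |cbar - c j| := by
        rw [abs_mul, hscale, abs_of_nonneg hscale_nonneg]
    _ ≤ (-cmin) / (cbar - cmin) * (m * (cbar - cmin)) := by gcongr
    _ = m * (-cmin) := by field_simp

theorem limiter_deviation_bound
    (m : ℕ) (hm : 1 ≤ m)
    (c : ℕ → ℝ)
    (cbar : ℝ) (hcbar : cbar = (∑ j ∈ Finset.Icc 1 m, c j) / m)
    (hcbarpos : 0 < cbar)
    (cmin : ℝ)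
    (hcminle : ∀ j ∈ Finset.Icc 1 m, cmin ≤ c j)
    (hcminmem : ∃ j ∈ Finset.Icc 1 m, c j = cmin)
    (hcminlt : cmin < cbar)
    (θ : ℝ) (hθ : θ = min 1 (cbar / (cbar - cmin)))
    (ctilde : ℕ → ℝ)
    (hctilde : ∀ j ∈ Finset.Icc 1 m, ctilde j = θ * c j + (1 - θ) * cbar)
    (hcminneg : cmin < 0) :
    ∀ j ∈ Finset.Icc 1 m, |ctilde j - c j| ≤ m * (-cmin) :=
  limiter_deviation_bound_general m c cbar hcbar cmin hcminle hcminlt θ hθ ctilde hctilde hcminneg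
end

section
/- Accuracy preservation of the local scaling limiter applied to cell averages: under the limiter assumptions, for any nonnegative real numbers g_1,…,g_m (g_j ≥ 0 for all j) and every 1 ≤ j ≤ m, one has |ρ̃_j − g_j| ≤ (1 + m·α) · max_{1≤i≤m} |ρ_i − g_i|. -/
open Finset

/-!
The limiter moves `ρ_j` by `(1 - θ) (c̄ - c_j) / h_j`, and `θ` is chosen so that
`(1 - θ) (c̄ - c_min)` is exactly the negative part `c_min⁻`. As every `c_i` lies above `c_min`,
`|c_j - c̄| ≤ m (c̄ - c_min)`, so the move is at most `m c_min⁻ / h_j`. The minimum is some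
`c_k = h_k ρ_k`, and since `g_k ≥ 0` we get `c_min⁻ ≤ h_k |ρ_k - g_k| ≤ α h_j err`.
-/

section LinearOrderedField

variable {K : Type*} [Field K] [LinearOrder K] [IsStrictOrderedRing K]

theorem one_sub_min_one_div_sub_mul_sub {a b : K} (hba : b < a) :
    (1 - min 1 (a / (a - b))) * (a - b) = b⁻ := by
  have hpos : 0 < a - b := sub_pos.2 hba
  rcases le_or_gt 0 b with hb | hb
  · rw [min_eq_left ((one_le_div hpos).2 (by linarith)), negPart_eq_zero.2 hb, sub_self,
      zero_mul]
  · rw [min_eq_right ((div_le_one hpos).2 (by linarith)), negPart_eq_neg.2 hb.le]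
    field_simp
    ring

theorem negPart_mul_le_mul_abs_sub {h ρ g : K} (hh : 0 ≤ h) (hg : 0 ≤ g) :
    (h * ρ)⁻ ≤ h * |ρ - g| := by
  have hρ : -ρ ≤ |ρ - g| := by
    linarith [neg_abs_le (ρ - g)]
  rw [negPart_def, ← mul_neg]
  exact sup_le (mul_le_mul_of_nonneg_left hρ hh) (mul_nonneg hh (abs_nonneg _))

theorem Finset.abs_sub_sum_div_card_le {ι : Type*} {s : Finset ι} {f : ι → K} {b : K}
    (hb : ∀ i ∈ s, b ≤ f i) {j : ι} (hj : j ∈ s) :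
    |f j - (∑ i ∈ s, f i) / #s| ≤ #s * ((∑ i ∈ s, f i) / #s - b) := by
  have hcard : (1 : K) ≤ #s := by exact_mod_cast card_pos.2 ⟨j, hj⟩
  have hmul : #s * ((∑ i ∈ s, f i) / #s - b) = ∑ i ∈ s, (f i - b) := by
    rw [sum_sub_distrib, sum_const, nsmul_eq_mul]
    field_simp
  have hle : f j - b ≤ ∑ i ∈ s, (f i - b) :=
    single_le_sum (f := fun i => f i - b) (fun i hi => sub_nonneg.2 (hb i hi)) hj
  have hmean : 0 ≤ (∑ i ∈ s, f i) / #s - b := by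
    have : 0 ≤ #s * ((∑ i ∈ s, f i) / #s - b) := hmul ▸ (sub_nonneg.2 (hb j hj)).trans hle
    exact (mul_nonneg_iff_of_pos_left (by linarith)).1 this
  rw [abs_le]
  constructor
  · nlinarith [hb j hj]
  · linarith

theorem abs_mul_add_one_sub_mul_div_sub_le {θ ρ a h M : K} (hθ : 0 ≤ 1 - θ) (hh : 0 < h)
    (hM : |h * ρ - a| ≤ M) :
    |θ * ρ + (1 - θ) * a / h - ρ| ≤ (1 - θ) * M / h := by
  have hshift : θ * ρ + (1 - θ) * a / h - ρ = (1 - θ) * (a - h * ρ) / h := by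
    field_simp
    ring
  rw [hshift, abs_div, abs_mul, abs_of_nonneg hθ, abs_of_pos hh, abs_sub_comm]
  gcongr

end LinearOrderedField

theorem limiter_accuracy_preservation_general
    (m : ℕ)
    (h : ℕ → ℝ) (hpos : ∀ j ∈ Finset.Icc 1 m, 0 < h j)
    (α : ℝ)
    (hratio : ∀ i ∈ Finset.Icc 1 m, ∀ j ∈ Finset.Icc 1 m, h i / h j ≤ α)
    (ρ : ℕ → ℝ)
    (c : ℕ → ℝ) (hc : ∀ j ∈ Finset.Icc 1 m, c j = h j * ρ j)
    (cbar : ℝ) (hcbar : cbar = (∑ j ∈ Finset.Icc 1 m, c j) / m)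
    (cmin : ℝ)
    (hcminle : ∀ j ∈ Finset.Icc 1 m, cmin ≤ c j)
    (hcminmem : ∃ j ∈ Finset.Icc 1 m, c j = cmin)
    (hcminlt : cmin < cbar)
    (θ : ℝ) (hθ : θ = min 1 (cbar / (cbar - cmin)))
    (ρtilde : ℕ → ℝ)
    (hρtilde : ∀ j ∈ Finset.Icc 1 m, ρtilde j = θ * ρ j + (1 - θ) * cbar / h j)
    (g : ℕ → ℝ) (hg : ∀ j ∈ Finset.Icc 1 m, 0 ≤ g j)
    (err : ℝ)
    (herrle : ∀ i ∈ Finset.Icc 1 m, |ρ i - g i| ≤ err) :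
    ∀ j ∈ Finset.Icc 1 m, |ρtilde j - g j| ≤ (1 + m * α) * err := by
  intro j hj
  obtain ⟨k, hk, rfl⟩ := hcminmem
  have hhj := hpos j hj
  have herr : 0 ≤ err := (abs_nonneg _).trans (herrle j hj)
  have hθle : 0 ≤ 1 - θ := hθ ▸ sub_nonneg.2 (min_le_left _ _)
  have hscale : (1 - θ) * (cbar - c k) = (c k)⁻ := hθ ▸ one_sub_min_one_div_sub_mul_sub hcminlt
  have hspread : |c j - cbar| ≤ m * (cbar - c k) := by
    simpa [hcbar] using abs_sub_sum_div_card_le hcminle hj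
  have hneg : (c k)⁻ ≤ α * h j * err := calc
    (c k)⁻ ≤ h k * |ρ k - g k| := hc k hk ▸ negPart_mul_le_mul_abs_sub (hpos k hk).le (hg k hk)
    _ ≤ h k * err := mul_le_mul_of_nonneg_left (herrle k hk) (hpos k hk).le
    _ ≤ α * h j * err := mul_le_mul_of_nonneg_right ((div_le_iff₀ hhj).1 (hratio k hk j hj)) herr
  have hcorrection : |ρtilde j - ρ j| ≤ m * α * err := calc
    |ρtilde j - ρ j| ≤ (1 - θ) * (m * (cbar - c k)) / h j :=
      hρtilde j hj ▸ abs_mul_add_one_sub_mul_div_sub_le hθle hhj (hc j hj ▸ hspread)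
    _ = m * (c k)⁻ / h j := by rw [← hscale]; ring
    _ ≤ m * (α * h j * err) / h j := by gcongr
    _ = m * α * err := by field_simp
  calc |ρtilde j - g j| ≤ |ρtilde j - ρ j| + |ρ j - g j| := abs_sub_le _ _ _
    _ ≤ m * α * err + err := add_le_add hcorrection (herrle j hj)
    _ = (1 + m * α) * err := by ring

theorem limiter_accuracy_preservation
    (m : ℕ) (hm : 1 ≤ m)
    (h : ℕ → ℝ) (hpos : ∀ j ∈ Finset.Icc 1 m, 0 < h j)
    (α : ℝ) (hα : 1 ≤ α)
    (hratio : ∀ i ∈ Finset.Icc 1 m, ∀ j ∈ Finset.Icc 1 m, h i / h j ≤ α)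
    (ρ : ℕ → ℝ)
    (c : ℕ → ℝ) (hc : ∀ j ∈ Finset.Icc 1 m, c j = h j * ρ j)
    (cbar : ℝ) (hcbar : cbar = (∑ j ∈ Finset.Icc 1 m, c j) / m)
    (hcbarpos : 0 < cbar)
    (cmin : ℝ)
    (hcminle : ∀ j ∈ Finset.Icc 1 m, cmin ≤ c j)
    (hcminmem : ∃ j ∈ Finset.Icc 1 m, c j = cmin)
    (hcminlt : cmin < cbar)
    (θ : ℝ) (hθ : θ = min 1 (cbar / (cbar - cmin)))
    (ρtilde : ℕ → ℝ)
    (hρtilde : ∀ j ∈ Finset.Icc 1 m, ρtilde j = θ * ρ j + (1 - θ) * cbar / h j)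
    (g : ℕ → ℝ) (hg : ∀ j ∈ Finset.Icc 1 m, 0 ≤ g j)
    (err : ℝ)
    (herrle : ∀ i ∈ Finset.Icc 1 m, |ρ i - g i| ≤ err)
    (herrmem : ∃ i ∈ Finset.Icc 1 m, |ρ i - g i| = err) :
    ∀ j ∈ Finset.Icc 1 m, |ρtilde j - g j| ≤ (1 + m * α) * err :=
  limiter_accuracy_preservation_general m h hpos α hratio ρ c hc cbar hcbar cmin hcminle hcminmem
    hcminlt θ hθ ρtilde hρtilde g hg err herrle
end
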